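/- arXiv:2201.11365 — 2 statements merged into one kernel-verified Lean document; each statement's English description precedes it below -/
import Mathlib

section
/- Let 1 ≤ a ≤ b ≤ c be integers with c = a+b, and let r be an integer with a+b < r ≤ a+c. Then there exist constants κ > 0 and p₀ > 0 such that for all 0 < p < p₀ and all integers l, h, w ≥ c: (i) ℙ_p(I(l,h+1,w) | I(l,h,w)) ≥ (1 − e^{−κ·p^{r−b}·w})^a · (1 − e^{−κ·p^{r−(a+b)}·w})^l, and (ii) ℙ_p(I(l+1,h,w) | I(l,h,w)) ≥ (1 − e^{−κ·p^{r−a}·w})^b · (1 − e^{−κ·p^{r−(a+b)}·w})^h. -/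
open Finset
open scoped Classical

/-- The anisotropic neighbourhood `N_{a,b,c}` in `ℤ³`. -/
noncomputable def nbhd3 (a b c : ℕ) : Finset (ℤ × ℤ × ℤ) :=
  (((Finset.Icc (-(a : ℤ)) (a : ℤ)).erase 0).image fun i => ((i, 0, 0) : ℤ × ℤ × ℤ)) ∪
  (((Finset.Icc (-(b : ℤ)) (b : ℤ)).erase 0).image fun i => ((0, i, 0) : ℤ × ℤ × ℤ)) ∪
  (((Finset.Icc (-(c : ℤ)) (c : ℤ)).erase 0).image fun i => ((0, 0, i) : ℤ × ℤ × ℤ))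

/-- The number of neighbours of `v` (within the region `R`) lying in the set `B`. -/
noncomputable def infCount3 (a b c : ℕ) (R B : Set (ℤ × ℤ × ℤ)) (v : ℤ × ℤ × ℤ) : ℕ :=
  ((nbhd3 a b c).filter fun x => v + x ∈ R ∧ v + x ∈ B).card

/-- The `N_r^{a,b,c}`-bootstrap closure of `A ∩ R` inside the region `R`: the smallest set
containing `A ∩ R` that is closed under infecting any `v ∈ R` with at least `r`
infected neighbours in `R`. -/
def closure3 (a b c r : ℕ) (R A : Set (ℤ × ℤ × ℤ)) : Set (ℤ × ℤ × ℤ) :=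
  ⋂₀ {B : Set (ℤ × ℤ × ℤ) | A ∩ R ⊆ B ∧ ∀ v ∈ R, r ≤ infCount3 a b c R B v → v ∈ B}

/-- The rectangular block `[l] × [h] × [w] ⊆ ℤ³`. -/
noncomputable def block3 (l h w : ℕ) : Finset (ℤ × ℤ × ℤ) :=
  (Finset.Icc (1 : ℤ) (l : ℤ)) ×ˢ (Finset.Icc (1 : ℤ) (h : ℤ)) ×ˢ (Finset.Icc (1 : ℤ) (w : ℤ))

/-- The cube `[L]³ ⊆ ℤ³`. -/
noncomputable def box3 (L : ℕ) : Finset (ℤ × ℤ × ℤ) := block3 L L L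

/-- `R` is internally filled by the initial set `A` under `N_r^{a,b,c}`-bootstrap
percolation, i.e. every vertex of `R` is eventually infected starting from `A ∩ R`. -/
def IntFilled3 (a b c r : ℕ) (R A : Finset (ℤ × ℤ × ℤ)) : Prop :=
  closure3 a b c r (↑R) (↑A) = (↑R : Set (ℤ × ℤ × ℤ))

/-- The probability of the event `E` when each vertex of `V` is included in the initial
set independently with probability `p`. -/
noncomputable def probOn (p : ℝ) (V : Finset (ℤ × ℤ × ℤ)) (E : Finset (ℤ × ℤ × ℤ) → Prop) : ℝ :=
  ∑ A ∈ V.powerset, if E A then p ^ A.card * (1 - p) ^ (V.card - A.card) else 0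

/-- Conditional probability `ℙ_p(E | F)` for the `p`-random subset of `V`. -/
noncomputable def condProbOn (p : ℝ) (V : Finset (ℤ × ℤ × ℤ))
    (E F : Finset (ℤ × ℤ × ℤ) → Prop) : ℝ :=
  probOn p V (fun A => E A ∧ F A) / probOn p V F

-- membership in nbhd3
lemma mem_nbhd3_e1 {a b c : ℕ} {k : ℤ} (hk : k ≠ 0) (hk2 : |k| ≤ (a:ℤ)) :
    ((k, 0, 0) : ℤ×ℤ×ℤ) ∈ nbhd3 a b c := by
  rw [abs_le] at hk2
  simp only [nbhd3, Finset.mem_union, Finset.mem_image, Finset.mem_erase, Finset.mem_Icc]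
  exact Or.inl (Or.inl ⟨k, ⟨hk, hk2.1, hk2.2⟩, rfl⟩)

lemma mem_nbhd3_e2 {a b c : ℕ} {k : ℤ} (hk : k ≠ 0) (hk2 : |k| ≤ (b:ℤ)) :
    ((0, k, 0) : ℤ×ℤ×ℤ) ∈ nbhd3 a b c := by
  rw [abs_le] at hk2
  simp only [nbhd3, Finset.mem_union, Finset.mem_image, Finset.mem_erase, Finset.mem_Icc]
  exact Or.inl (Or.inr ⟨k, ⟨hk, hk2.1, hk2.2⟩, rfl⟩)

lemma mem_nbhd3_e3 {a b c : ℕ} {k : ℤ} (hk : k ≠ 0) (hk2 : |k| ≤ (c:ℤ)) :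
    ((0, 0, k) : ℤ×ℤ×ℤ) ∈ nbhd3 a b c := by
  rw [abs_le] at hk2
  simp only [nbhd3, Finset.mem_union, Finset.mem_image, Finset.mem_erase, Finset.mem_Icc]
  exact Or.inr ⟨k, ⟨hk, hk2.1, hk2.2⟩, rfl⟩

lemma infCount3_mono {a b c : ℕ} {R B B' : Set (ℤ×ℤ×ℤ)} (h : B ⊆ B') (v : ℤ×ℤ×ℤ) :
    infCount3 a b c R B v ≤ infCount3 a b c R B' v := by
  apply Finset.card_le_card
  apply Finset.monotone_filter_right
  exact fun x _ hx => ⟨hx.1, h hx.2⟩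

lemma inter_subset_closure3 {a b c r : ℕ} {R A : Set (ℤ×ℤ×ℤ)} :
    A ∩ R ⊆ closure3 a b c r R A := by
  intro v hv B hB
  exact hB.1 hv

lemma closure3_subset {a b c r : ℕ} {R A : Set (ℤ×ℤ×ℤ)} :
    closure3 a b c r R A ⊆ R := by
  intro v hv
  exact hv R ⟨Set.inter_subset_right, fun v hv _ => hv⟩

lemma closure3_closed {a b c r : ℕ} {R A : Set (ℤ×ℤ×ℤ)} {v : ℤ×ℤ×ℤ} (hv : v ∈ R)
    (h : r ≤ infCount3 a b c R (closure3 a b c r R A) v) : v ∈ closure3 a b c r R A := by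
  intro B hB
  apply hB.2 v hv
  refine le_trans h (infCount3_mono ?_ v)
  exact Set.sInter_subset_of_mem hB

lemma closure3_minimal {a b c r : ℕ} {R A B : Set (ℤ×ℤ×ℤ)} (h1 : A ∩ R ⊆ B)
    (h2 : ∀ v ∈ R, r ≤ infCount3 a b c R B v → v ∈ B) : closure3 a b c r R A ⊆ B :=
  Set.sInter_subset_of_mem ⟨h1, h2⟩

lemma closure3_mono_R {a b c r : ℕ} {R R' A : Set (ℤ×ℤ×ℤ)} (h : R ⊆ R') :
    closure3 a b c r R A ⊆ closure3 a b c r R' A := by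
  apply closure3_minimal
  · exact le_trans (Set.inter_subset_inter_right _ h) inter_subset_closure3
  · intro v hv hc
    apply closure3_closed (h hv)
    refine le_trans hc (Finset.card_le_card (Finset.monotone_filter_right _ ?_))
    exact fun x _ hx => ⟨h hx.1, hx.2⟩

lemma closure3_inter_self {a b c r : ℕ} (R A : Set (ℤ×ℤ×ℤ)) :
    closure3 a b c r R (A ∩ R) = closure3 a b c r R A := by
  unfold closure3
  have : {B : Set (ℤ×ℤ×ℤ) | (A ∩ R) ∩ R ⊆ B ∧ ∀ v ∈ R, r ≤ infCount3 a b c R B v → v ∈ B}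
      = {B : Set (ℤ×ℤ×ℤ) | A ∩ R ⊆ B ∧ ∀ v ∈ R, r ≤ infCount3 a b c R B v → v ∈ B} := by
    ext B
    simp [Set.inter_assoc, Set.inter_self]
  rw [this]

lemma closure3_eq_of_subset {a b c r : ℕ} {R A : Set (ℤ×ℤ×ℤ)} (h : R ⊆ A) :
    closure3 a b c r R A = R := by
  apply le_antisymm closure3_subset
  intro v hv
  exact inter_subset_closure3 ⟨h hv, hv⟩


lemma add3 (x y z u v w : ℤ) : ((x,y,z) : ℤ×ℤ×ℤ) + (u,v,w) = (x+u,y+v,z+w) := rfl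

/-- Key single-row infection lemma. -/
lemma rowfill (a b c r s : ℕ) (hs1 : 1 ≤ s) (hsc : s ≤ c) (hsr : s ≤ r)
    (R A : Set (ℤ×ℤ×ℤ)) (x0 y0 : ℤ) (w : ℕ)
    (hmem : ∀ z : ℤ, 1 ≤ z → z ≤ (w:ℤ) → ((x0,y0,z) : ℤ×ℤ×ℤ) ∈ R)
    (hfree : ∀ z : ℤ, 1 ≤ z → z ≤ (w:ℤ) →
      (r - s : ℕ) ≤ ((nbhd3 a b c).filter fun d => d.2.2 = 0 ∧
        ((x0,y0,z) : ℤ×ℤ×ℤ)+d ∈ R ∧ ((x0,y0,z) : ℤ×ℤ×ℤ)+d ∈ closure3 a b c r R A).card)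
    (z0 : ℤ) (hz0 : 0 ≤ z0) (hz0w : z0 + (s:ℤ) ≤ (w:ℤ))
    (hseed : ∀ k : ℤ, 1 ≤ k → k ≤ (s:ℤ) → ((x0,y0,z0+k) : ℤ×ℤ×ℤ) ∈ closure3 a b c r R A) :
    ∀ z : ℤ, 1 ≤ z → z ≤ (w:ℤ) → ((x0,y0,z) : ℤ×ℤ×ℤ) ∈ closure3 a b c r R A := by
  set B := closure3 a b c r R A with hB
  have step : ∀ ε : ℤ, (ε = 1 ∨ ε = -1) → ∀ z : ℤ, 1 ≤ z → z ≤ (w:ℤ) →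
      (∀ k : ℤ, 1 ≤ k → k ≤ (s:ℤ) →
        ((x0,y0,z+ε*k) : ℤ×ℤ×ℤ) ∈ B ∧ 1 ≤ z+ε*k ∧ z+ε*k ≤ (w:ℤ)) →
      ((x0,y0,z) : ℤ×ℤ×ℤ) ∈ B := by
    intro ε hε z hz1 hz2 hk
    have hεne : ε ≠ 0 := by rcases hε with h|h <;> simp [h]
    have hεabs : |ε| = 1 := by rcases hε with h|h <;> simp [h]
    apply closure3_closed (hmem z hz1 hz2)
    unfold infCount3
    set S1 := ((nbhd3 a b c).filter fun d => d.2.2 = 0 ∧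
        ((x0,y0,z) : ℤ×ℤ×ℤ)+d ∈ R ∧ ((x0,y0,z) : ℤ×ℤ×ℤ)+d ∈ B) with hS1
    set S2 := (Finset.Icc (1:ℤ) (s:ℤ)).image (fun k => ((0:ℤ),(0:ℤ),ε*k)) with hS2
    have hS2card : S2.card = s := by
      rw [hS2, Finset.card_image_of_injective, Int.card_Icc]
      · omega
      · intro k k' he
        simp only [Prod.mk.injEq] at he
        exact mul_left_cancel₀ hεne he.2.2
    have hsub : S1 ∪ S2 ⊆ (nbhd3 a b c).filter fun d =>
        ((x0,y0,z) : ℤ×ℤ×ℤ)+d ∈ R ∧ ((x0,y0,z) : ℤ×ℤ×ℤ)+d ∈ B := by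
      apply Finset.union_subset
      · exact Finset.monotone_filter_right _ (fun d _ hd => hd.2)
      · intro d hd
        rw [hS2, Finset.mem_image] at hd
        obtain ⟨k, hkm, rfl⟩ := hd
        rw [Finset.mem_Icc] at hkm
        have h1 : ε*k ≠ 0 := mul_ne_zero hεne (by omega)
        have h2 : |ε*k| ≤ (c:ℤ) := by
          rw [abs_mul, hεabs, one_mul, abs_of_nonneg (by omega)]
          omega
        have := hk k hkm.1 hkm.2
        rw [Finset.mem_filter, add3]
        simp only [add_zero]
        exact ⟨mem_nbhd3_e3 h1 h2, hmem _ this.2.1 this.2.2, this.1⟩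
    have hdisj : Disjoint S1 S2 := by
      rw [Finset.disjoint_left]
      intro d hd1 hd2
      rw [hS1, Finset.mem_filter] at hd1
      rw [hS2, Finset.mem_image] at hd2
      obtain ⟨k, hkm, rfl⟩ := hd2
      rw [Finset.mem_Icc] at hkm
      have : ε*k ≠ 0 := mul_ne_zero hεne (by omega)
      exact this hd1.2.1
    calc r = (r - s) + s := by omega
    _ ≤ S1.card + S2.card := by
        have h1 : r - s ≤ S1.card := by rw [hS1]; exact hfree z hz1 hz2
        omega
    _ = (S1 ∪ S2).card := (Finset.card_union_of_disjoint hdisj).symm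
    _ ≤ _ := Finset.card_le_card hsub
  -- rightward
  have right : ∀ n : ℕ, z0 + (s:ℤ) + n ≤ (w:ℤ) → ((x0,y0,z0+(s:ℤ)+n) : ℤ×ℤ×ℤ) ∈ B := by
    intro n
    induction n using Nat.strong_induction_on with
    | _ n ih =>
      intro hnw
      rcases Nat.eq_zero_or_pos n with hn0 | hn0
      · subst hn0
        simpa using hseed s (by exact_mod_cast hs1) le_rfl
      · apply step (-1) (Or.inr rfl) _ (by omega) hnw
        intro k hk1 hk2
        have hrange : 1 ≤ z0 + (s:ℤ) + n + (-1)*k ∧ z0 + (s:ℤ) + n + (-1)*k ≤ (w:ℤ) := by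
          constructor <;> omega
        refine ⟨?_, hrange⟩
        rcases le_or_gt k n with hkn | hkn
        · have hkt : (k.toNat : ℤ) = k := Int.toNat_of_nonneg (by omega)
          have h1 : n - k.toNat < n := by omega
          have := ih (n - k.toNat) h1 (by push_cast; omega)
          convert this using 3
          push_cast
          omega
        · have hj : 1 ≤ (s:ℤ) + n - k ∧ (s:ℤ) + n - k ≤ (s:ℤ) := by omega
          have := hseed ((s:ℤ) + n - k) hj.1 hj.2
          convert this using 3
          ring
  -- leftward
  have left : ∀ n : ℕ, 1 ≤ z0 + 1 - n → ((x0,y0,z0+1-(n:ℤ)) : ℤ×ℤ×ℤ) ∈ B := by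
    intro n
    induction n using Nat.strong_induction_on with
    | _ n ih =>
      intro hn1
      rcases Nat.eq_zero_or_pos n with hn0 | hn0
      · subst hn0
        simpa using hseed 1 le_rfl (by exact_mod_cast hs1)
      · apply step 1 (Or.inl rfl) _ hn1 (by omega)
        intro k hk1 hk2
        have hrange : 1 ≤ z0 + 1 - n + 1*k ∧ z0 + 1 - n + 1*k ≤ (w:ℤ) := by
          constructor <;> omega
        refine ⟨?_, hrange⟩
        rcases lt_or_ge k n with hkn | hkn
        · have h1 : n - k.toNat < n := by omega
          have := ih (n - k.toNat) h1 (by push_cast; omega)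
          convert this using 3
          push_cast
          omega
        · have hj : 1 ≤ k - n + 1 ∧ k - n + 1 ≤ (s:ℤ) := by omega
          have := hseed (k - n + 1) hj.1 hj.2
          convert this using 3
          ring
  intro z hz1 hz2
  rcases le_or_gt z z0 with hcase | hcase
  · have := left (z0 + 1 - z).toNat (by omega)
    convert this using 3
    omega
  · rcases le_or_gt z (z0 + s) with hcase2 | hcase2
    · have := hseed (z - z0) (by omega) (by omega)
      convert this using 3
      ring
    · have := right (z - z0 - s).toNat (by omega)
      convert this using 3
      omega

lemma mem_block3 {l h w : ℕ} {x y z : ℤ} : ((x,y,z) : ℤ×ℤ×ℤ) ∈ block3 l h w ↔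
    (1 ≤ x ∧ x ≤ (l:ℤ)) ∧ (1 ≤ y ∧ y ≤ (h:ℤ)) ∧ (1 ≤ z ∧ z ≤ (w:ℤ)) := by
  simp [block3, Finset.mem_product, Finset.mem_Icc]

lemma card_image_neg_e1 (s : ℕ) :
    ((Finset.Icc (1:ℤ) (s:ℤ)).image (fun i => ((-i, 0, 0) : ℤ×ℤ×ℤ))).card = s := by
  rw [Finset.card_image_of_injective, Int.card_Icc]
  · omega
  · intro i j he
    simp only [Prod.mk.injEq] at he
    omega

lemma card_image_neg_e2 (s : ℕ) :
    ((Finset.Icc (1:ℤ) (s:ℤ)).image (fun j => ((0, -j, 0) : ℤ×ℤ×ℤ))).card = s := by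
  rw [Finset.card_image_of_injective, Int.card_Icc]
  · omega
  · intro i j he
    simp only [Prod.mk.injEq] at he
    omega

/-- Row lengths needed for growth in the e₂ direction. -/
def rowlen2 (a b r : ℕ) (x : ℤ) : ℕ := if x ≤ (a:ℤ) then r - b else r - (a+b)

/-- Growth in the e₂ direction: filling `[l]×[h+1]×[w]` from `[l]×[h]×[w]` plus seeds. -/
lemma fill_e2 (a b c r : ℕ) (ha : 1 ≤ a) (hab : a ≤ b) (hc : c = a+b)
    (hr1 : a+b < r) (hr2 : r ≤ a+c)
    (l h w : ℕ) (hl : c ≤ l) (hh : c ≤ h) (hw : c ≤ w)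
    (A : Finset (ℤ×ℤ×ℤ))
    (hsmall : (↑(block3 l h w) : Set (ℤ×ℤ×ℤ)) ⊆
      closure3 a b c r (↑(block3 l (h+1) w)) (↑A))
    (hseed : ∀ x : ℤ, 1 ≤ x → x ≤ (l:ℤ) → ∃ z0 : ℤ, 0 ≤ z0 ∧
      z0 + (rowlen2 a b r x : ℤ) ≤ (w:ℤ) ∧
      ∀ k : ℤ, 1 ≤ k → k ≤ (rowlen2 a b r x : ℤ) → ((x, (h:ℤ)+1, z0+k) : ℤ×ℤ×ℤ) ∈ A) :
    IntFilled3 a b c r (block3 l (h+1) w) A := by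
  set R : Set (ℤ×ℤ×ℤ) := ↑(block3 l (h+1) w) with hR
  set B : Set (ℤ×ℤ×ℤ) := closure3 a b c r R ↑A with hBdef
  have hmemR : ∀ x y z : ℤ, 1 ≤ x → x ≤ (l:ℤ) → 1 ≤ y → y ≤ (h:ℤ)+1 → 1 ≤ z → z ≤ (w:ℤ) →
      ((x,y,z) : ℤ×ℤ×ℤ) ∈ R := by
    intro x y z h1 h2 h3 h4 h5 h6
    rw [hR, Finset.mem_coe, mem_block3]
    push_cast
    exact ⟨⟨h1,h2⟩,⟨h3, by omega⟩,⟨h5,h6⟩⟩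
  have rows : ∀ n : ℕ, ∀ x : ℤ, x = (n:ℤ) → 1 ≤ x → x ≤ (l:ℤ) →
      ∀ z : ℤ, 1 ≤ z → z ≤ (w:ℤ) → ((x,(h:ℤ)+1,z) : ℤ×ℤ×ℤ) ∈ B := by
    intro n
    induction n using Nat.strong_induction_on with
    | _ n ih =>
      intro x hxn hx1 hxl
      obtain ⟨z0, hz00, hz0w, hz0A⟩ := hseed x hx1 hxl
      have hs1 : 1 ≤ rowlen2 a b r x := by unfold rowlen2; split <;> omega
      have hsc : rowlen2 a b r x ≤ c := by unfold rowlen2; split <;> omega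
      have hsr : rowlen2 a b r x ≤ r := by unfold rowlen2; split <;> omega
      apply rowfill a b c r (rowlen2 a b r x) hs1 hsc hsr R ↑A x ((h:ℤ)+1) w
      · intro z hz1 hz2
        exact hmemR x _ z hx1 hxl (by omega) (by omega) hz1 hz2
      · -- free neighbours
        intro z hz1 hz2
        set S2 := (Finset.Icc (1:ℤ) (b:ℤ)).image (fun j => ((0, -j, 0) : ℤ×ℤ×ℤ)) with hS2
        have hS2mem : ∀ d ∈ S2, d ∈ nbhd3 a b c ∧ d.2.2 = 0 ∧
            ((x,(h:ℤ)+1,z) : ℤ×ℤ×ℤ)+d ∈ R ∧ ((x,(h:ℤ)+1,z) : ℤ×ℤ×ℤ)+d ∈ B := by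
          intro d hd
          rw [hS2, Finset.mem_image] at hd
          obtain ⟨j, hj, rfl⟩ := hd
          rw [Finset.mem_Icc] at hj
          rw [add3]
          refine ⟨mem_nbhd3_e2 (by omega) (by rw [abs_neg, abs_of_nonneg (by omega)]; omega), rfl, ?_, ?_⟩
          · simp only [add_zero]
            exact hmemR x _ z hx1 hxl (by omega) (by omega) hz1 hz2
          · simp only [add_zero]
            apply hsmall
            rw [Finset.mem_coe, mem_block3]
            refine ⟨⟨hx1, hxl⟩, ⟨by omega, by omega⟩, ⟨hz1, hz2⟩⟩
        rcases le_or_gt x (a:ℤ) with hxa | hxa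
        · -- x ≤ a : need r - (r-b) = b free neighbours
          have hb : r - rowlen2 a b r x = b := by unfold rowlen2; rw [if_pos hxa]; omega
          rw [hb]
          refine le_trans (le_of_eq (card_image_neg_e2 b).symm) (Finset.card_le_card ?_)
          intro d hd
          simp only [Finset.mem_filter]
          obtain ⟨h1, h2, h3, h4⟩ := hS2mem d (by rw [hS2]; exact hd)
          exact ⟨h1, h2, h3, h4⟩
        · -- x > a
          set S1 := (Finset.Icc (1:ℤ) (a:ℤ)).image (fun i => ((-i, 0, 0) : ℤ×ℤ×ℤ)) with hS1
          have hS1mem : ∀ d ∈ S1, d ∈ nbhd3 a b c ∧ d.2.2 = 0 ∧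
              ((x,(h:ℤ)+1,z) : ℤ×ℤ×ℤ)+d ∈ R ∧ ((x,(h:ℤ)+1,z) : ℤ×ℤ×ℤ)+d ∈ B := by
            intro d hd
            rw [hS1, Finset.mem_image] at hd
            obtain ⟨i, hi, rfl⟩ := hd
            rw [Finset.mem_Icc] at hi
            rw [add3]
            refine ⟨mem_nbhd3_e1 (by omega) (by rw [abs_neg, abs_of_nonneg (by omega)]; omega), rfl, ?_, ?_⟩
            · simp only [add_zero]
              exact hmemR (x + -i) _ z (by omega) (by omega) (by omega) (by omega) hz1 hz2
            · simp only [add_zero]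
              have hxi : (((x + -i).toNat : ℤ)) = x + -i := Int.toNat_of_nonneg (by omega)
              have hlt : (x + -i).toNat < n := by omega
              exact ih _ hlt (x + -i) hxi.symm (by omega) (by omega) z hz1 hz2
          have hdisj : Disjoint S1 S2 := by
            rw [Finset.disjoint_left]
            intro d hd1 hd2
            rw [hS1, Finset.mem_image] at hd1
            rw [hS2, Finset.mem_image] at hd2
            obtain ⟨i, hi, rfl⟩ := hd1
            rw [Finset.mem_Icc] at hi
            obtain ⟨j, hj, he⟩ := hd2
            simp only [Prod.mk.injEq] at he
            omega
          have hab2 : r - rowlen2 a b r x = a + b := by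
            unfold rowlen2; rw [if_neg (by omega)]; omega
          have hcards : (S1 ∪ S2).card = a + b := by
            rw [Finset.card_union_of_disjoint hdisj, hS1, hS2,
              card_image_neg_e1, card_image_neg_e2]
          rw [hab2]
          refine le_trans (le_of_eq hcards.symm) (Finset.card_le_card ?_)
          intro d hd
          simp only [Finset.mem_filter]
          rcases Finset.mem_union.mp hd with hd' | hd'
          · obtain ⟨h1, h2, h3, h4⟩ := hS1mem d hd'
            exact ⟨h1, h2, h3, h4⟩
          · obtain ⟨h1, h2, h3, h4⟩ := hS2mem d hd'
            exact ⟨h1, h2, h3, h4⟩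
      · exact hz00
      · exact hz0w
      · intro k hk1 hk2
        apply inter_subset_closure3
        refine ⟨hz0A k hk1 hk2, hmemR x _ _ hx1 hxl (by omega) (by omega) (by omega) (by omega)⟩
  -- conclude
  unfold IntFilled3
  apply le_antisymm closure3_subset
  intro v hv
  obtain ⟨x, y, z⟩ := v
  rw [Finset.mem_coe, mem_block3] at hv
  push_cast at hv
  obtain ⟨⟨hx1, hx2⟩, ⟨hy1, hy2⟩, ⟨hz1, hz2⟩⟩ := hv
  rcases le_or_gt y (h:ℤ) with hyh | hyh
  · apply hsmall
    rw [Finset.mem_coe, mem_block3]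
    exact ⟨⟨hx1, hx2⟩, ⟨hy1, hyh⟩, ⟨hz1, hz2⟩⟩
  · have hy : y = (h:ℤ)+1 := by omega
    subst hy
    exact rows x.toNat x (Int.toNat_of_nonneg (by omega)).symm hx1 hx2 z hz1 hz2
/-- Row lengths needed for growth in the e₁ direction. -/
def rowlen1 (a b r : ℕ) (y : ℤ) : ℕ := if y ≤ (b:ℤ) then r - a else r - (a+b)

/-- Growth in the e₁ direction: filling `[l+1]×[h]×[w]` from `[l]×[h]×[w]` plus seeds. -/
lemma fill_e1 (a b c r : ℕ) (ha : 1 ≤ a) (hab : a ≤ b) (hc : c = a+b)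
    (hr1 : a+b < r) (hr2 : r ≤ a+c)
    (l h w : ℕ) (hl : c ≤ l) (hh : c ≤ h) (hw : c ≤ w)
    (A : Finset (ℤ×ℤ×ℤ))
    (hsmall : (↑(block3 l h w) : Set (ℤ×ℤ×ℤ)) ⊆
      closure3 a b c r (↑(block3 (l+1) h w)) (↑A))
    (hseed : ∀ y : ℤ, 1 ≤ y → y ≤ (h:ℤ) → ∃ z0 : ℤ, 0 ≤ z0 ∧
      z0 + (rowlen1 a b r y : ℤ) ≤ (w:ℤ) ∧
      ∀ k : ℤ, 1 ≤ k → k ≤ (rowlen1 a b r y : ℤ) → (((l:ℤ)+1, y, z0+k) : ℤ×ℤ×ℤ) ∈ A) :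
    IntFilled3 a b c r (block3 (l+1) h w) A := by
  set R : Set (ℤ×ℤ×ℤ) := ↑(block3 (l+1) h w) with hR
  set B : Set (ℤ×ℤ×ℤ) := closure3 a b c r R ↑A with hBdef
  have hmemR : ∀ x y z : ℤ, 1 ≤ x → x ≤ (l:ℤ)+1 → 1 ≤ y → y ≤ (h:ℤ) → 1 ≤ z → z ≤ (w:ℤ) →
      ((x,y,z) : ℤ×ℤ×ℤ) ∈ R := by
    intro x y z h1 h2 h3 h4 h5 h6
    rw [hR, Finset.mem_coe, mem_block3]
    push_cast
    exact ⟨⟨h1, by omega⟩,⟨h3, h4⟩,⟨h5,h6⟩⟩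
  have rows : ∀ n : ℕ, ∀ y : ℤ, y = (n:ℤ) → 1 ≤ y → y ≤ (h:ℤ) →
      ∀ z : ℤ, 1 ≤ z → z ≤ (w:ℤ) → (((l:ℤ)+1,y,z) : ℤ×ℤ×ℤ) ∈ B := by
    intro n
    induction n using Nat.strong_induction_on with
    | _ n ih =>
      intro y hyn hy1 hyh
      obtain ⟨z0, hz00, hz0w, hz0A⟩ := hseed y hy1 hyh
      have hs1 : 1 ≤ rowlen1 a b r y := by unfold rowlen1; split <;> omega
      have hsc : rowlen1 a b r y ≤ c := by unfold rowlen1; split <;> omega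
      have hsr : rowlen1 a b r y ≤ r := by unfold rowlen1; split <;> omega
      apply rowfill a b c r (rowlen1 a b r y) hs1 hsc hsr R ↑A ((l:ℤ)+1) y w
      · intro z hz1 hz2
        exact hmemR _ y z (by omega) (by omega) hy1 hyh hz1 hz2
      · -- free neighbours
        intro z hz1 hz2
        set S1 := (Finset.Icc (1:ℤ) (a:ℤ)).image (fun i => ((-i, 0, 0) : ℤ×ℤ×ℤ)) with hS1
        have hS1mem : ∀ d ∈ S1, d ∈ nbhd3 a b c ∧ d.2.2 = 0 ∧
            (((l:ℤ)+1,y,z) : ℤ×ℤ×ℤ)+d ∈ R ∧ (((l:ℤ)+1,y,z) : ℤ×ℤ×ℤ)+d ∈ B := by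
          intro d hd
          rw [hS1, Finset.mem_image] at hd
          obtain ⟨i, hi, rfl⟩ := hd
          rw [Finset.mem_Icc] at hi
          rw [add3]
          refine ⟨mem_nbhd3_e1 (by omega) (by rw [abs_neg, abs_of_nonneg (by omega)]; omega), rfl, ?_, ?_⟩
          · simp only [add_zero]
            exact hmemR _ y z (by omega) (by omega) hy1 hyh hz1 hz2
          · simp only [add_zero]
            apply hsmall
            rw [Finset.mem_coe, mem_block3]
            refine ⟨⟨by omega, by omega⟩, ⟨hy1, hyh⟩, ⟨hz1, hz2⟩⟩
        rcases le_or_gt y (b:ℤ) with hyb | hyb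
        · -- y ≤ b : need r - (r-a) = a free neighbours
          have hb : r - rowlen1 a b r y = a := by unfold rowlen1; rw [if_pos hyb]; omega
          rw [hb]
          refine le_trans (le_of_eq (card_image_neg_e1 a).symm) (Finset.card_le_card ?_)
          intro d hd
          simp only [Finset.mem_filter]
          obtain ⟨h1, h2, h3, h4⟩ := hS1mem d (by rw [hS1]; exact hd)
          exact ⟨h1, h2, h3, h4⟩
        · -- y > b
          set S2 := (Finset.Icc (1:ℤ) (b:ℤ)).image (fun j => ((0, -j, 0) : ℤ×ℤ×ℤ)) with hS2
          have hS2mem : ∀ d ∈ S2, d ∈ nbhd3 a b c ∧ d.2.2 = 0 ∧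
              (((l:ℤ)+1,y,z) : ℤ×ℤ×ℤ)+d ∈ R ∧ (((l:ℤ)+1,y,z) : ℤ×ℤ×ℤ)+d ∈ B := by
            intro d hd
            rw [hS2, Finset.mem_image] at hd
            obtain ⟨j, hj, rfl⟩ := hd
            rw [Finset.mem_Icc] at hj
            rw [add3]
            refine ⟨mem_nbhd3_e2 (by omega) (by rw [abs_neg, abs_of_nonneg (by omega)]; omega), rfl, ?_, ?_⟩
            · simp only [add_zero]
              exact hmemR _ (y + -j) z (by omega) (by omega) (by omega) (by omega) hz1 hz2
            · simp only [add_zero]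
              have hyj : (((y + -j).toNat : ℤ)) = y + -j := Int.toNat_of_nonneg (by omega)
              have hlt : (y + -j).toNat < n := by omega
              exact ih _ hlt (y + -j) hyj.symm (by omega) (by omega) z hz1 hz2
          have hdisj : Disjoint S1 S2 := by
            rw [Finset.disjoint_left]
            intro d hd1 hd2
            rw [hS1, Finset.mem_image] at hd1
            rw [hS2, Finset.mem_image] at hd2
            obtain ⟨i, hi, rfl⟩ := hd1
            rw [Finset.mem_Icc] at hi
            obtain ⟨j, hj, he⟩ := hd2
            simp only [Prod.mk.injEq] at he
            omega
          have hab2 : r - rowlen1 a b r y = a + b := by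
            unfold rowlen1; rw [if_neg (by omega)]; omega
          have hcards : (S1 ∪ S2).card = a + b := by
            rw [Finset.card_union_of_disjoint hdisj, hS1, hS2,
              card_image_neg_e1, card_image_neg_e2]
          rw [hab2]
          refine le_trans (le_of_eq hcards.symm) (Finset.card_le_card ?_)
          intro d hd
          simp only [Finset.mem_filter]
          rcases Finset.mem_union.mp hd with hd' | hd'
          · obtain ⟨h1, h2, h3, h4⟩ := hS1mem d hd'
            exact ⟨h1, h2, h3, h4⟩
          · obtain ⟨h1, h2, h3, h4⟩ := hS2mem d hd'
            exact ⟨h1, h2, h3, h4⟩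
      · exact hz00
      · exact hz0w
      · intro k hk1 hk2
        apply inter_subset_closure3
        refine ⟨hz0A k hk1 hk2, hmemR _ y _ (by omega) (by omega) hy1 hyh (by omega) (by omega)⟩
  unfold IntFilled3
  apply le_antisymm closure3_subset
  intro v hv
  obtain ⟨x, y, z⟩ := v
  rw [Finset.mem_coe, mem_block3] at hv
  push_cast at hv
  obtain ⟨⟨hx1, hx2⟩, ⟨hy1, hy2⟩, ⟨hz1, hz2⟩⟩ := hv
  rcases le_or_gt x (l:ℤ) with hxl | hxl
  · apply hsmall
    rw [Finset.mem_coe, mem_block3]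
    exact ⟨⟨hx1, hxl⟩, ⟨hy1, hy2⟩, ⟨hz1, hz2⟩⟩
  · have hx : x = (l:ℤ)+1 := by omega
    subst hx
    exact rows y.toNat y (Int.toNat_of_nonneg (by omega)).symm hy1 hy2 z hz1 hz2


section probOn
variable {p : ℝ} {V V1 V2 : Finset (ℤ×ℤ×ℤ)} {E F : Finset (ℤ×ℤ×ℤ) → Prop}

lemma probOn_congr (h : ∀ A ∈ V.powerset, (E A ↔ F A)) : probOn p V E = probOn p V F := by
  unfold probOn
  apply Finset.sum_congr rfl
  intro A hA
  rw [if_congr (h A hA) rfl rfl]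

lemma probOn_nonneg (hp0 : 0 ≤ p) (hp1 : p ≤ 1) : 0 ≤ probOn p V E := by
  apply Finset.sum_nonneg
  intro A _
  have h1 : (0:ℝ) ≤ 1 - p := by linarith
  split
  · positivity
  · exact le_refl 0

lemma probOn_mono (hp0 : 0 ≤ p) (hp1 : p ≤ 1) (h : ∀ A ∈ V.powerset, E A → F A) :
    probOn p V E ≤ probOn p V F := by
  apply Finset.sum_le_sum
  intro A hA
  have h1 : (0:ℝ) ≤ 1 - p := by linarith
  by_cases hE : E A
  · rw [if_pos hE, if_pos (h A hA hE)]
  · rw [if_neg hE]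
    split
    · positivity
    · exact le_refl 0

lemma probOn_union (hd : Disjoint V1 V2) (E F : Finset (ℤ×ℤ×ℤ) → Prop) :
    probOn p (V1 ∪ V2) (fun A => E (A ∩ V1) ∧ F (A ∩ V2)) = probOn p V1 E * probOn p V2 F := by
  unfold probOn
  rw [Finset.sum_mul_sum, ← Finset.sum_product']
  apply Finset.sum_nbij' (i := fun A => (A ∩ V1, A ∩ V2)) (j := fun q => q.1 ∪ q.2)
  · intro A _
    rw [Finset.mem_product]
    exact ⟨Finset.mem_powerset.mpr Finset.inter_subset_right,
      Finset.mem_powerset.mpr Finset.inter_subset_right⟩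
  · intro q hq
    rw [Finset.mem_product, Finset.mem_powerset, Finset.mem_powerset] at hq
    exact Finset.mem_powerset.mpr (Finset.union_subset_union hq.1 hq.2)
  · intro A hA
    rw [Finset.mem_powerset] at hA
    rw [← Finset.inter_union_distrib_left]
    exact Finset.inter_eq_left.mpr hA
  · intro q hq
    rw [Finset.mem_product, Finset.mem_powerset, Finset.mem_powerset] at hq
    have e1 : (q.1 ∪ q.2) ∩ V1 = q.1 := by
      rw [Finset.union_inter_distrib_right, Finset.inter_eq_left.mpr hq.1,
        Finset.disjoint_iff_inter_eq_empty.mp (hd.symm.mono_left hq.2), Finset.union_empty]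
    have e2 : (q.1 ∪ q.2) ∩ V2 = q.2 := by
      rw [Finset.union_inter_distrib_right, Finset.inter_eq_left.mpr hq.2,
        Finset.disjoint_iff_inter_eq_empty.mp (hd.mono_left hq.1), Finset.empty_union]
    simp only [e1, e2]
  · intro A hA
    rw [Finset.mem_powerset] at hA
    have hAeq : (A ∩ V1) ∪ (A ∩ V2) = A := by
      rw [← Finset.inter_union_distrib_left]
      exact Finset.inter_eq_left.mpr hA
    have hdisj : Disjoint (A ∩ V1) (A ∩ V2) :=
      hd.mono Finset.inter_subset_right Finset.inter_subset_right
    have hcard : A.card = (A ∩ V1).card + (A ∩ V2).card := by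
      have := Finset.card_union_of_disjoint hdisj
      rw [hAeq] at this
      exact this
    have hc1 : (A ∩ V1).card ≤ V1.card := Finset.card_le_card Finset.inter_subset_right
    have hc2 : (A ∩ V2).card ≤ V2.card := Finset.card_le_card Finset.inter_subset_right
    have hcardV : (V1 ∪ V2).card = V1.card + V2.card := Finset.card_union_of_disjoint hd
    have hsub : (V1 ∪ V2).card - A.card = (V1.card - (A ∩ V1).card) + (V2.card - (A ∩ V2).card) := by
      omega
    by_cases hE : E (A ∩ V1) <;> by_cases hF : F (A ∩ V2)
    · rw [if_pos ⟨hE, hF⟩, if_pos hE, if_pos hF]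
      dsimp only
      rw [hsub, hcard, pow_add, pow_add]
      ring
    · rw [if_neg (fun hc => hF hc.2), if_neg hF, mul_zero]
    · rw [if_neg (fun hc => hE hc.1), if_pos hF, if_neg hE, zero_mul]
    · rw [if_neg (fun hc => hE hc.1), if_neg hE, zero_mul]

lemma probOn_true : probOn p V (fun _ => True) = 1 := by
  induction V using Finset.induction with
  | empty => simp [probOn]
  | @insert x s hx ih =>
    unfold probOn at ih ⊢
    rw [Finset.sum_powerset_insert hx, ← Finset.sum_add_distrib]
    refine Eq.trans (Finset.sum_congr rfl ?_) ih
    intro t ht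
    rw [Finset.mem_powerset] at ht
    have hxt : x ∉ t := fun hc => hx (ht hc)
    rw [if_pos trivial, if_pos trivial, if_pos trivial,
      Finset.card_insert_of_notMem hxt, Finset.card_insert_of_notMem hx]
    have h1 : s.card + 1 - t.card = (s.card - t.card) + 1 := by
      have := Finset.card_le_card ht
      omega
    have h2 : s.card + 1 - (t.card + 1) = s.card - t.card := by omega
    rw [h1, h2, pow_succ, pow_succ]
    ring

lemma probOn_split : probOn p V E + probOn p V (fun A => ¬ E A) = 1 := by
  rw [← probOn_true (p := p) (V := V)]
  unfold probOn
  rw [← Finset.sum_add_distrib]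
  apply Finset.sum_congr rfl
  intro A _
  by_cases hE : E A
  · rw [if_pos hE, if_neg (not_not_intro hE), if_pos trivial, add_zero]
  · rw [if_neg hE, if_pos hE, if_pos trivial, zero_add]

lemma probOn_restrict (h : V1 ⊆ V) (E : Finset (ℤ×ℤ×ℤ) → Prop) :
    probOn p V (fun A => E (A ∩ V1)) = probOn p V1 E := by
  have hV : V = V1 ∪ (V \ V1) := by rw [Finset.union_sdiff_of_subset h]
  rw [probOn_congr (F := fun A => E (A ∩ V1) ∧ (fun _ => True) (A ∩ (V \ V1)))
    (by intro A _; simp), hV, probOn_union Finset.disjoint_sdiff E (fun _ => True),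
    probOn_true, mul_one]

lemma probOn_family {ι : Type} [DecidableEq ι] (I : Finset ι) (Vf : ι → Finset (ℤ×ℤ×ℤ))
    (hd : ∀ i ∈ I, ∀ j ∈ I, i ≠ j → Disjoint (Vf i) (Vf j)) (Ef : ι → Finset (ℤ×ℤ×ℤ) → Prop) :
    probOn p (I.biUnion Vf) (fun A => ∀ i ∈ I, Ef i (A ∩ Vf i)) =
      ∏ i ∈ I, probOn p (Vf i) (Ef i) := by
  induction I using Finset.induction with
  | empty =>
    simp only [Finset.biUnion_empty, Finset.prod_empty]
    rw [probOn_congr (F := fun _ => True) (by intro A _; simp)]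
    exact probOn_true
  | @insert j I hj ih =>
    have hbu : (insert j I).biUnion Vf = Vf j ∪ I.biUnion Vf := by
      rw [Finset.biUnion_insert]
    have hdd : Disjoint (Vf j) (I.biUnion Vf) := by
      rw [Finset.disjoint_biUnion_right]
      intro i hi
      exact hd j (Finset.mem_insert_self j I) i (Finset.mem_insert_of_mem hi)
        (fun he => hj (he ▸ hi))
    have hsubU : ∀ i ∈ I, Vf i ⊆ I.biUnion Vf := fun i hi => Finset.subset_biUnion_of_mem Vf hi
    rw [hbu, Finset.prod_insert hj]
    calc probOn p (Vf j ∪ I.biUnion Vf) (fun A => ∀ i ∈ insert j I, Ef i (A ∩ Vf i))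
        = probOn p (Vf j ∪ I.biUnion Vf) (fun A => (fun A1 => Ef j (A1 ∩ Vf j)) (A ∩ Vf j) ∧
            (fun A2 => ∀ i ∈ I, Ef i (A2 ∩ Vf i)) (A ∩ I.biUnion Vf)) := by
          apply probOn_congr
          intro A _
          simp only [Finset.forall_mem_insert]
          constructor
          · intro ⟨h1, h2⟩
            refine ⟨by rw [Finset.inter_assoc, Finset.inter_self]; exact h1, ?_⟩
            intro i hi
            rw [Finset.inter_assoc, Finset.inter_eq_right.mpr (hsubU i hi)]
            exact h2 i hi
          · intro ⟨h1, h2⟩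
            rw [Finset.inter_assoc, Finset.inter_self] at h1
            refine ⟨h1, ?_⟩
            intro i hi
            have := h2 i hi
            rwa [Finset.inter_assoc, Finset.inter_eq_right.mpr (hsubU i hi)] at this
      _ = probOn p (Vf j) (fun A1 => Ef j (A1 ∩ Vf j)) *
            probOn p (I.biUnion Vf) (fun A2 => ∀ i ∈ I, Ef i (A2 ∩ Vf i)) :=
          probOn_union hdd (fun A1 => Ef j (A1 ∩ Vf j)) (fun A2 => ∀ i ∈ I, Ef i (A2 ∩ Vf i))
      _ = probOn p (Vf j) (Ef j) * ∏ i ∈ I, probOn p (Vf i) (Ef i) := by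
          congr 1
          · apply probOn_congr
            intro A hA
            rw [Finset.mem_powerset] at hA
            rw [Finset.inter_eq_left.mpr hA]
          · exact ih (fun i hi => fun k hk => hd i (Finset.mem_insert_of_mem hi) k
              (Finset.mem_insert_of_mem hk))

lemma probOn_full (W : Finset (ℤ×ℤ×ℤ)) : probOn p W (fun A => W ⊆ A) = p ^ W.card := by
  unfold probOn
  rw [Finset.sum_eq_single W]
  · simp
  · intro A hA hne
    rw [Finset.mem_powerset] at hA
    rw [if_neg]
    intro hWA
    exact hne (Finset.Subset.antisymm hA hWA)
  · intro hW
    exact absurd (Finset.mem_powerset_self W) hW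

lemma probOn_notfull (W : Finset (ℤ×ℤ×ℤ)) :
    probOn p W (fun A => ¬ W ⊆ A) = 1 - p ^ W.card := by
  have := probOn_split (p := p) (V := W) (E := fun A => W ⊆ A)
  rw [probOn_full] at this
  linarith

lemma probOn_pos (hp0 : 0 < p) (hp1 : p < 1) (hV : E V) : 0 < probOn p V E := by
  unfold probOn
  have hterm : (0:ℝ) < (if E V then p ^ V.card * (1 - p) ^ (V.card - V.card) else 0) := by
    rw [if_pos hV]
    have : (0:ℝ) < 1 - p := by linarith
    positivity
  apply lt_of_lt_of_le hterm
  apply Finset.single_le_sum (f := fun A => if E A then p ^ A.card * (1 - p) ^ (V.card - A.card) else 0)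
  · intro A _
    have : (0:ℝ) ≤ 1 - p := by linarith
    split
    · positivity
    · exact le_refl 0
  · exact Finset.mem_powerset_self V

end probOn


/-- The row `{x0} × {y0} × [w]`. -/
noncomputable def row3 (x0 y0 : ℤ) (w : ℕ) : Finset (ℤ×ℤ×ℤ) := {x0} ×ˢ {y0} ×ˢ Finset.Icc 1 (w:ℤ)

/-- There is a run of `s` consecutive elements of `A` in the row `{x0} × {y0} × [w]`. -/
def RunE (x0 y0 : ℤ) (s w : ℕ) (A : Finset (ℤ×ℤ×ℤ)) : Prop :=
  ∃ z0 : ℤ, 0 ≤ z0 ∧ z0 + (s:ℤ) ≤ (w:ℤ) ∧ ∀ k : ℤ, 1 ≤ k → k ≤ (s:ℤ) → (x0,y0,z0+k) ∈ A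

lemma mem_row3 {x0 y0 : ℤ} {w : ℕ} {v : ℤ×ℤ×ℤ} :
    v ∈ row3 x0 y0 w ↔ v.1 = x0 ∧ v.2.1 = y0 ∧ 1 ≤ v.2.2 ∧ v.2.2 ≤ (w:ℤ) := by
  obtain ⟨x, y, z⟩ := v
  simp only [row3, Finset.mem_product, Finset.mem_singleton, Finset.mem_Icc]

lemma RunE_inter {x0 y0 : ℤ} {s w : ℕ} {A : Finset (ℤ×ℤ×ℤ)} :
    RunE x0 y0 s w (A ∩ row3 x0 y0 w) ↔ RunE x0 y0 s w A := by
  constructor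
  · rintro ⟨z0, h1, h2, h3⟩
    exact ⟨z0, h1, h2, fun k hk1 hk2 => (Finset.mem_inter.mp (h3 k hk1 hk2)).1⟩
  · rintro ⟨z0, h1, h2, h3⟩
    refine ⟨z0, h1, h2, fun k hk1 hk2 => Finset.mem_inter.mpr ⟨h3 k hk1 hk2, ?_⟩⟩
    rw [mem_row3]
    refine ⟨rfl, rfl, ?_, ?_⟩
    · show (1:ℤ) ≤ z0 + k
      omega
    · show z0 + k ≤ (w:ℤ)
      omega

/-- Probability bound for finding a run of `s` consecutive infected sites in a row. -/
lemma row_prob {p : ℝ} (hp0 : 0 ≤ p) (hp1 : p ≤ 1) (x0 y0 : ℤ) (s w : ℕ)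
    (hs : 1 ≤ s) (hsw : s ≤ w) :
    1 - (1 - p^s)^(w / s) ≤ probOn p (row3 x0 y0 w) (RunE x0 y0 s w) := by
  set m := w / s with hm
  set Wf : ℕ → Finset (ℤ×ℤ×ℤ) :=
    fun j => {x0} ×ˢ {y0} ×ˢ Finset.Icc ((j*s:ℕ)+1 : ℤ) ((j*s:ℕ)+(s:ℕ) : ℤ) with hWf
  have hmemWf : ∀ j, ∀ v : ℤ×ℤ×ℤ, v ∈ Wf j ↔
      v.1 = x0 ∧ v.2.1 = y0 ∧ ((j*s:ℕ):ℤ)+1 ≤ v.2.2 ∧ v.2.2 ≤ ((j*s:ℕ):ℤ)+(s:ℤ) := by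
    intro j v
    obtain ⟨x, y, z⟩ := v
    simp only [hWf, Finset.mem_product, Finset.mem_singleton, Finset.mem_Icc]
  have hWfsub : ∀ j ∈ Finset.range m, Wf j ⊆ row3 x0 y0 w := by
    intro j hj v hv
    rw [hmemWf] at hv
    rw [Finset.mem_range] at hj
    have hjs : (j+1)*s ≤ w := le_trans (Nat.mul_le_mul_right s hj) (Nat.div_mul_le_self w s)
    rw [mem_row3]
    refine ⟨hv.1, hv.2.1, by push_cast; omega, ?_⟩
    have : ((j*s:ℕ):ℤ)+(s:ℤ) ≤ (w:ℤ) := by push_cast; push_cast at hjs; nlinarith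
    omega
  have hWfdisj : ∀ i ∈ Finset.range m, ∀ j ∈ Finset.range m, i ≠ j →
      Disjoint (Wf i) (Wf j) := by
    intro i _ j _ hij
    rw [Finset.disjoint_left]
    intro v hvi hvj
    rw [hmemWf] at hvi hvj
    have h1 := hvi.2.2
    have h2 := hvj.2.2
    have key : i*s + s ≤ j*s ∨ j*s + s ≤ i*s := by
      rcases Nat.lt_or_ge i j with hlt|hge
      · left
        calc i*s+s = (i+1)*s := by ring
        _ ≤ j*s := Nat.mul_le_mul_right s (by omega)
      · right
        calc j*s+s = (j+1)*s := by ring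
        _ ≤ i*s := Nat.mul_le_mul_right s (by omega)
    have keyz : ((i*s:ℕ):ℤ) + (s:ℤ) ≤ ((j*s:ℕ):ℤ) ∨ ((j*s:ℕ):ℤ) + (s:ℤ) ≤ ((i*s:ℕ):ℤ) := by
      rcases key with hk|hk
      · left; exact_mod_cast hk
      · right; exact_mod_cast hk
    omega
  have hcardWf : ∀ j, (Wf j).card = s := by
    intro j
    rw [hWf]
    rw [Finset.card_product, Finset.card_product, Finset.card_singleton,
      Finset.card_singleton, Int.card_Icc]
    simp
  set U := (Finset.range m).biUnion Wf with hU
  have hUsub : U ⊆ row3 x0 y0 w := by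
    rw [hU]
    intro v hv
    rw [Finset.mem_biUnion] at hv
    obtain ⟨j, hj, hvj⟩ := hv
    exact hWfsub j hj hvj
  -- complement bound
  have hcompl : probOn p (row3 x0 y0 w) (fun A => ¬ RunE x0 y0 s w A) ≤ (1-p^s)^m := by
    have h1 : probOn p (row3 x0 y0 w) (fun A => ¬ RunE x0 y0 s w A) ≤
        probOn p (row3 x0 y0 w) (fun A => ∀ j ∈ Finset.range m, ¬ Wf j ⊆ ((A ∩ U) ∩ Wf j)) := by
      apply probOn_mono hp0 hp1
      intro A _ hnot j hj
      intro hsubj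
      apply hnot
      refine ⟨(j*s:ℕ), by positivity, ?_, ?_⟩
      · rw [Finset.mem_range] at hj
        have hjs : (j+1)*s ≤ w := le_trans (Nat.mul_le_mul_right s hj) (Nat.div_mul_le_self w s)
        push_cast at hjs ⊢
        nlinarith
      · intro k hk1 hk2
        have : ((x0,y0,((j*s:ℕ):ℤ)+k) : ℤ×ℤ×ℤ) ∈ Wf j := by
          rw [hmemWf]
          refine ⟨rfl, rfl, ?_, ?_⟩
          · show ((j*s:ℕ):ℤ)+1 ≤ ((j*s:ℕ):ℤ)+k
            omega
          · show ((j*s:ℕ):ℤ)+k ≤ ((j*s:ℕ):ℤ)+(s:ℤ)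
            omega
        have := hsubj this
        exact (Finset.mem_inter.mp (Finset.mem_inter.mp this).1).1
    have h2 : probOn p (row3 x0 y0 w) (fun A => ∀ j ∈ Finset.range m, ¬ Wf j ⊆ ((A ∩ U) ∩ Wf j))
        = probOn p U (fun A' => ∀ j ∈ Finset.range m, ¬ Wf j ⊆ (A' ∩ Wf j)) :=
      probOn_restrict hUsub (fun A' => ∀ j ∈ Finset.range m, ¬ Wf j ⊆ (A' ∩ Wf j))
    have h3 : probOn p U (fun A' => ∀ j ∈ Finset.range m, ¬ Wf j ⊆ (A' ∩ Wf j))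
        = ∏ j ∈ Finset.range m, probOn p (Wf j) (fun t => ¬ Wf j ⊆ t) := by
      rw [hU]
      exact probOn_family (Finset.range m) Wf hWfdisj (fun j t => ¬ Wf j ⊆ t)
    have h4 : ∏ j ∈ Finset.range m, probOn p (Wf j) (fun t => ¬ Wf j ⊆ t) = (1-p^s)^m := by
      have he : ∀ j ∈ Finset.range m, probOn p (Wf j) (fun t => ¬ Wf j ⊆ t) = (1-p^s) := by
        intro j _
        rw [probOn_notfull (Wf j), hcardWf j]
      rw [Finset.prod_congr rfl he, Finset.prod_const, Finset.card_range]
    rw [h2, h3, h4] at h1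
    exact h1
  have := probOn_split (p := p) (V := row3 x0 y0 w) (E := RunE x0 y0 s w)
  linarith

/-- Numeric bound: `(1-p^s)^(w/s) ≤ exp(-p^s w/(2c))`. -/
lemma run_numeric {p : ℝ} (hp0 : 0 < p) (hp1 : p < 1) (c s w : ℕ)
    (hs1 : 1 ≤ s) (hsc : s ≤ c) (hcw : c ≤ w) (hc : 1 ≤ c) :
    (1 - p^s)^(w / s) ≤ Real.exp (-(1/(2*(c:ℝ))) * p^s * (w:ℝ)) := by
  have hps0 : 0 < p^s := pow_pos hp0 s
  have hps1 : p^s ≤ 1 := pow_le_one₀ (le_of_lt hp0) (le_of_lt hp1)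
  have hq : w / c ≤ w / s := Nat.div_le_div_left hsc (by omega)
  have hq1 : 1 ≤ w / c := (Nat.one_le_div_iff (by omega)).mpr hcw
  have hqreal : (w:ℝ) / (2*(c:ℝ)) ≤ ((w/c : ℕ):ℝ) := by
    have hmod := Nat.div_add_mod w c
    set q := w / c with hqdef
    have hmodlt : w % c < c := Nat.mod_lt _ (by omega)
    have hwlt : w < c*q + c := by omega
    have hwltR : (w:ℝ) < (c:ℝ)*(q:ℝ) + (c:ℝ) := by exact_mod_cast hwlt
    have hq1R : (1:ℝ) ≤ (q:ℝ) := by exact_mod_cast hq1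
    have hcR : (0:ℝ) < (c:ℝ) := by exact_mod_cast (by omega : 0 < c)
    rw [div_le_iff₀ (by positivity)]
    nlinarith
  have step1 : (1 - p^s)^(w/s) ≤ Real.exp (-(p^s))^(w/s) := by
    apply pow_le_pow_left₀ (by linarith)
    linarith [Real.add_one_le_exp (-(p^s))]
  have step2 : Real.exp (-(p^s))^(w/s) = Real.exp (((w/s : ℕ):ℝ) * (-(p^s))) := by
    rw [Real.exp_nat_mul]
  have step3 : Real.exp (((w/s : ℕ):ℝ) * (-(p^s))) ≤ Real.exp (-(1/(2*(c:ℝ))) * p^s * (w:ℝ)) := by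
    rw [Real.exp_le_exp]
    have hms : (w:ℝ)/(2*(c:ℝ)) ≤ ((w/s : ℕ):ℝ) := le_trans hqreal (by exact_mod_cast hq)
    have hc0 : (0:ℝ) < 2*(c:ℝ) := by positivity
    have : (w:ℝ)/(2*(c:ℝ)) * (p^s) ≤ ((w/s : ℕ):ℝ) * (p^s) :=
      mul_le_mul_of_nonneg_right hms (le_of_lt hps0)
    have heq : -(1/(2*(c:ℝ))) * p^s * (w:ℝ) = -((w:ℝ)/(2*(c:ℝ)) * (p^s)) := by
      field_simp
    rw [heq]
    linarith
  calc (1 - p^s)^(w/s) ≤ Real.exp (-(p^s))^(w/s) := step1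
  _ = _ := step2
  _ ≤ _ := step3


lemma IntFilled3_inter {a b c r : ℕ} (R A : Finset (ℤ×ℤ×ℤ)) :
    IntFilled3 a b c r R (A ∩ R) ↔ IntFilled3 a b c r R A := by
  unfold IntFilled3
  rw [Finset.coe_inter, closure3_inter_self]

lemma IntFilled3_self {a b c r : ℕ} (R : Finset (ℤ×ℤ×ℤ)) : IntFilled3 a b c r R R :=
  closure3_eq_of_subset (le_refl _)

lemma texp_nonneg {p : ℝ} (hp0 : 0 < p) (c s w : ℕ) (hc : 1 ≤ c) :
    0 ≤ 1 - Real.exp (-(1/(2*(c:ℝ))) * p^s * (w:ℝ)) := by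
  have hcR : (0:ℝ) < (c:ℝ) := by exact_mod_cast hc
  have harg : -(1/(2*(c:ℝ))) * p^s * (w:ℝ) ≤ 0 := by
    have h1 : (0:ℝ) ≤ (1/(2*(c:ℝ))) * p^s * (w:ℝ) := by positivity
    linarith
  have := Real.exp_le_one_iff.mpr harg
  linarith

lemma texp_le_one {p : ℝ} (c s w : ℕ) :
    1 - Real.exp (-(1/(2*(c:ℝ))) * p^s * (w:ℝ)) ≤ 1 := by
  have := Real.exp_pos (-(1/(2*(c:ℝ))) * p^s * (w:ℝ))
  linarith

/-- Lower bound on a product over `Icc 1 n` split at `m`. -/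
lemma prod_split_bound (m n : ℕ) (hmn : m ≤ n) (t1 t2 : ℝ) (ht10 : 0 ≤ t1) (ht20 : 0 ≤ t2)
    (ht21 : t2 ≤ 1) (f : ℤ → ℝ)
    (h1 : ∀ x : ℤ, 1 ≤ x → x ≤ (m:ℤ) → t1 ≤ f x)
    (h2 : ∀ x : ℤ, (m:ℤ) < x → x ≤ (n:ℤ) → t2 ≤ f x) :
    t1 ^ m * t2 ^ n ≤ ∏ x ∈ Finset.Icc (1:ℤ) (n:ℤ), f x := by
  have hsplit : Finset.Icc (1:ℤ) (n:ℤ) = Finset.Icc 1 (m:ℤ) ∪ Finset.Icc ((m:ℤ)+1) (n:ℤ) := by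
    ext i
    simp only [Finset.mem_Icc, Finset.mem_union]
    omega
  have hdisj : Disjoint (Finset.Icc (1:ℤ) (m:ℤ)) (Finset.Icc ((m:ℤ)+1) (n:ℤ)) := by
    rw [Finset.disjoint_left]
    intro i hi1 hi2
    rw [Finset.mem_Icc] at hi1 hi2
    omega
  rw [hsplit, Finset.prod_union hdisj]
  have hcard1 : (Finset.Icc (1:ℤ) (m:ℤ)).card = m := by rw [Int.card_Icc]; omega
  have hcard2 : (Finset.Icc ((m:ℤ)+1) (n:ℤ)).card = n - m := by rw [Int.card_Icc]; omega
  have hb1 : t1 ^ m ≤ ∏ x ∈ Finset.Icc (1:ℤ) (m:ℤ), f x := by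
    calc t1 ^ m = ∏ _x ∈ Finset.Icc (1:ℤ) (m:ℤ), t1 := by rw [Finset.prod_const, hcard1]
    _ ≤ _ := by
      apply Finset.prod_le_prod (fun i _ => ht10)
      intro i hi
      rw [Finset.mem_Icc] at hi
      exact h1 i hi.1 hi.2
  have hb2 : t2 ^ (n - m) ≤ ∏ x ∈ Finset.Icc ((m:ℤ)+1) (n:ℤ), f x := by
    calc t2 ^ (n-m) = ∏ _x ∈ Finset.Icc ((m:ℤ)+1) (n:ℤ), t2 := by
          rw [Finset.prod_const, hcard2]
    _ ≤ _ := by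
      apply Finset.prod_le_prod (fun i _ => ht20)
      intro i hi
      rw [Finset.mem_Icc] at hi
      exact h2 i (by omega) hi.2
  have hb3 : t2 ^ n ≤ t2 ^ (n - m) := pow_le_pow_of_le_one ht20 ht21 (by omega)
  calc t1 ^ m * t2 ^ n ≤ t1 ^ m * t2 ^ (n - m) :=
        mul_le_mul_of_nonneg_left hb3 (pow_nonneg ht10 m)
  _ ≤ (∏ x ∈ Finset.Icc (1:ℤ) (m:ℤ), f x) * (∏ x ∈ Finset.Icc ((m:ℤ)+1) (n:ℤ), f x) := by
      apply mul_le_mul hb1 hb2 (pow_nonneg ht20 _)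
      exact le_trans (pow_nonneg ht10 m) hb1

/-- Part (i) of the main theorem. -/
lemma part_i (a b c r : ℕ) (ha : 1 ≤ a) (hab : a ≤ b) (hc : c = a + b)
    (hr1 : a + b < r) (hr2 : r ≤ a + c) {p : ℝ} (hp0 : 0 < p) (hp1 : p < 1)
    (l h w : ℕ) (hl : c ≤ l) (hh : c ≤ h) (hw : c ≤ w) :
    (1 - Real.exp (-(1/(2*(c:ℝ))) * p ^ (r - b) * (w : ℝ))) ^ a *
        (1 - Real.exp (-(1/(2*(c:ℝ))) * p ^ (r - (a + b)) * (w : ℝ))) ^ l ≤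
      condProbOn p (block3 l (h + 1) w)
        (IntFilled3 a b c r (block3 l (h + 1) w))
        (IntFilled3 a b c r (block3 l h w)) := by
  have hc1 : 1 ≤ c := by omega
  set V := block3 l (h+1) w with hV
  set V1 := block3 l h w with hV1
  set Vf : ℤ → Finset (ℤ×ℤ×ℤ) :=
    fun i => if i = 0 then block3 l h w else row3 i ((h:ℤ)+1) w with hVf
  set Ef : ℤ → Finset (ℤ×ℤ×ℤ) → Prop :=
    fun i A' => if i = 0 then IntFilled3 a b c r (block3 l h w) A'
      else RunE i ((h:ℤ)+1) (rowlen2 a b r i) w A' with hEf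
  have hsub1 : V1 ⊆ V := by
    intro v hv
    obtain ⟨x, y, z⟩ := v
    rw [hV1, mem_block3] at hv
    rw [hV, mem_block3]
    push_cast
    refine ⟨hv.1, ⟨hv.2.1.1, by omega⟩, hv.2.2⟩
  -- K1 : the union of the parts is V
  have hK1 : (Finset.Icc (0:ℤ) (l:ℤ)).biUnion Vf = V := by
    ext v
    obtain ⟨x, y, z⟩ := v
    simp only [Finset.mem_biUnion, Finset.mem_Icc]
    constructor
    · rintro ⟨i, hi, hv⟩
      by_cases h0 : i = 0
      · rw [h0] at hv
        rw [hVf] at hv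
        simp only [eq_self_iff_true, if_true] at hv
        rw [mem_block3] at hv
        rw [hV, mem_block3]
        push_cast
        refine ⟨hv.1, ⟨hv.2.1.1, by omega⟩, hv.2.2⟩
      · rw [hVf] at hv
        simp only [if_neg h0] at hv
        rw [mem_row3] at hv
        obtain ⟨he1, he2, he3, he4⟩ := hv
        rw [hV, mem_block3]
        push_cast
        simp only at he1 he2 he3 he4
        refine ⟨⟨by omega, by omega⟩, ⟨by omega, by omega⟩, by omega, by omega⟩
    · intro hv
      rw [hV, mem_block3] at hv
      push_cast at hv
      rcases le_or_gt y (h:ℤ) with hy | hy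
      · refine ⟨0, ⟨le_refl 0, by omega⟩, ?_⟩
        rw [hVf]
        simp only [eq_self_iff_true, if_true]
        rw [mem_block3]
        exact ⟨hv.1, ⟨hv.2.1.1, hy⟩, hv.2.2⟩
      · refine ⟨x, ⟨by omega, by omega⟩, ?_⟩
        rw [hVf]
        simp only [if_neg (by omega : ¬ x = 0)]
        rw [mem_row3]
        refine ⟨rfl, ?_, ?_, ?_⟩
        · show y = (h:ℤ)+1
          omega
        · show (1:ℤ) ≤ z
          exact hv.2.2.1
        · show z ≤ (w:ℤ)
          exact hv.2.2.2
  -- K2 : disjointness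
  have hK2 : ∀ i ∈ Finset.Icc (0:ℤ) (l:ℤ), ∀ j ∈ Finset.Icc (0:ℤ) (l:ℤ), i ≠ j →
      Disjoint (Vf i) (Vf j) := by
    have hrow_blk : ∀ j : ℤ, j ≠ 0 → Disjoint (block3 l h w) (row3 j ((h:ℤ)+1) w) := by
      intro j hj
      rw [Finset.disjoint_left]
      intro v hv1 hv2
      obtain ⟨x, y, z⟩ := v
      rw [mem_block3] at hv1
      rw [mem_row3] at hv2
      have := hv2.2.1
      simp only at this
      omega
    intro i _ j _ hij
    rw [hVf]
    by_cases h0i : i = 0 <;> by_cases h0j : j = 0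
    · exact absurd (h0i.trans h0j.symm) hij
    · simp only [if_pos h0i, if_neg h0j]
      exact hrow_blk j h0j
    · simp only [if_neg h0i, if_pos h0j]
      exact (hrow_blk i h0i).symm
    · simp only [if_neg h0i, if_neg h0j]
      rw [Finset.disjoint_left]
      intro v hv1 hv2
      rw [mem_row3] at hv1 hv2
      exact hij (hv1.1.symm.trans hv2.1)
  -- K3 : family event implies E ∧ F
  have hK3 : ∀ A ∈ V.powerset, (∀ i ∈ Finset.Icc (0:ℤ) (l:ℤ), Ef i (A ∩ Vf i)) →
      IntFilled3 a b c r V A ∧ IntFilled3 a b c r V1 A := by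
    intro A _ hall
    have h0mem : (0:ℤ) ∈ Finset.Icc (0:ℤ) (l:ℤ) := by
      rw [Finset.mem_Icc]; constructor <;> omega
    have h0 := hall 0 h0mem
    rw [hEf] at h0
    simp only [eq_self_iff_true, if_true] at h0
    have hVf0 : Vf 0 = block3 l h w := by rw [hVf]; simp
    rw [hVf0] at h0
    have hF : IntFilled3 a b c r V1 A := by
      rw [hV1]
      exact (IntFilled3_inter (block3 l h w) A).mp h0
    refine ⟨?_, hF⟩
    have hsmall : (↑(block3 l h w) : Set (ℤ×ℤ×ℤ)) ⊆
        closure3 a b c r (↑(block3 l (h+1) w)) (↑A) := by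
      have heq : closure3 a b c r (↑(block3 l h w)) (↑A) = ↑(block3 l h w) := hF
      rw [← heq]
      apply closure3_mono_R
      exact_mod_cast hsub1
    have hseed : ∀ x : ℤ, 1 ≤ x → x ≤ (l:ℤ) → ∃ z0 : ℤ, 0 ≤ z0 ∧
        z0 + (rowlen2 a b r x : ℤ) ≤ (w:ℤ) ∧
        ∀ k : ℤ, 1 ≤ k → k ≤ (rowlen2 a b r x : ℤ) → ((x, (h:ℤ)+1, z0+k) : ℤ×ℤ×ℤ) ∈ A := by
      intro x hx1 hx2
      have hxmem : x ∈ Finset.Icc (0:ℤ) (l:ℤ) := by rw [Finset.mem_Icc]; omega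
      have hx := hall x hxmem
      rw [hEf] at hx
      simp only [if_neg (by omega : ¬ x = 0)] at hx
      have hVfx : Vf x = row3 x ((h:ℤ)+1) w := by
        rw [hVf]; simp only [if_neg (by omega : ¬ x = 0)]
      rw [hVfx] at hx
      exact RunE_inter.mp hx
    exact fill_e2 a b c r ha hab hc hr1 hr2 l h w hl hh hw A hsmall hseed
  -- numerator ≥ family probability = D * P
  set N := probOn p V (fun A => IntFilled3 a b c r V A ∧ IntFilled3 a b c r V1 A) with hN
  set D := probOn p V1 (fun A' => IntFilled3 a b c r (block3 l h w) A') with hD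
  set P := ∏ x ∈ Finset.Icc (1:ℤ) (l:ℤ), probOn p (Vf x) (Ef x) with hP
  have hfam : probOn p V (fun A => ∀ i ∈ Finset.Icc (0:ℤ) (l:ℤ), Ef i (A ∩ Vf i)) = D * P := by
    rw [← hK1]
    rw [probOn_family (Finset.Icc (0:ℤ) (l:ℤ)) Vf hK2 Ef]
    have hIcc : Finset.Icc (0:ℤ) (l:ℤ) = insert 0 (Finset.Icc 1 (l:ℤ)) := by
      ext i
      simp only [Finset.mem_Icc, Finset.mem_insert]
      omega
    have h0notin : (0:ℤ) ∉ Finset.Icc (1:ℤ) (l:ℤ) := by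
      rw [Finset.mem_Icc]; omega
    rw [hIcc, Finset.prod_insert h0notin]
    have hVf0 : probOn p (Vf 0) (Ef 0) = D := rfl
    rw [hVf0]
  have hNge : D * P ≤ N := by
    rw [← hfam, hN]
    exact probOn_mono (le_of_lt hp0) (le_of_lt hp1)
      (fun A hA hfa => hK3 A hA hfa)
  -- denominator equals D
  have hDeq : probOn p V (fun A => IntFilled3 a b c r V1 A) = D := by
    rw [hD]
    have : probOn p V (fun A => IntFilled3 a b c r V1 A)
        = probOn p V (fun A => (fun A' => IntFilled3 a b c r (block3 l h w) A') (A ∩ V1)) := by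
      apply probOn_congr
      intro A _
      rw [hV1]
      exact (IntFilled3_inter (block3 l h w) A).symm
    rw [this, probOn_restrict hsub1]
  have hDpos : 0 < D := by
    rw [hD]
    exact probOn_pos hp0 hp1 (IntFilled3_self (block3 l h w))
  -- per-row bounds
  set t1 := 1 - Real.exp (-(1/(2*(c:ℝ))) * p ^ (r - b) * (w : ℝ)) with ht1
  set t2 := 1 - Real.exp (-(1/(2*(c:ℝ))) * p ^ (r - (a+b)) * (w : ℝ)) with ht2
  have ht10 : 0 ≤ t1 := texp_nonneg hp0 c (r-b) w hc1
  have ht20 : 0 ≤ t2 := texp_nonneg hp0 c (r-(a+b)) w hc1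
  have ht21 : t2 ≤ 1 := texp_le_one c (r-(a+b)) w
  have hrow : ∀ x : ℤ, 1 ≤ x → x ≤ (l:ℤ) →
      1 - Real.exp (-(1/(2*(c:ℝ))) * p ^ (rowlen2 a b r x) * (w : ℝ)) ≤
        probOn p (Vf x) (Ef x) := by
    intro x hx1 hx2
    have hVfx : Vf x = row3 x ((h:ℤ)+1) w := by
      rw [hVf]; simp only [if_neg (by omega : ¬ x = 0)]
    have hEfx : probOn p (Vf x) (Ef x) =
        probOn p (row3 x ((h:ℤ)+1) w) (RunE x ((h:ℤ)+1) (rowlen2 a b r x) w) := by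
      rw [hVfx]
      apply probOn_congr
      intro A' _
      rw [hEf]
      simp only [if_neg (by omega : ¬ x = 0)]
    rw [hEfx]
    have hs1 : 1 ≤ rowlen2 a b r x := by unfold rowlen2; split <;> omega
    have hsc : rowlen2 a b r x ≤ c := by unfold rowlen2; split <;> omega
    have hnum := run_numeric hp0 hp1 c (rowlen2 a b r x) w hs1 hsc hw hc1
    have hrp := row_prob (le_of_lt hp0) (le_of_lt hp1) x ((h:ℤ)+1) (rowlen2 a b r x) w hs1
      (le_trans hsc hw)
    linarith
  have hPge : t1 ^ a * t2 ^ l ≤ P := by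
    rw [hP]
    apply prod_split_bound a l (le_trans (by omega : a ≤ c) hl) t1 t2 ht10 ht20 ht21
    · intro x hx1 hx2
      have := hrow x hx1 (by omega)
      have hrl : rowlen2 a b r x = r - b := by unfold rowlen2; rw [if_pos hx2]
      rw [hrl] at this
      rw [ht1]
      exact this
    · intro x hx1 hx2
      have := hrow x (by omega) hx2
      have hrl : rowlen2 a b r x = r - (a+b) := by unfold rowlen2; rw [if_neg (by omega)]
      rw [hrl] at this
      rw [ht2]
      exact this
  -- conclude
  unfold condProbOn
  rw [hDeq]
  rw [le_div_iff₀ hDpos]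
  have hPN : (t1 ^ a * t2 ^ l) * D ≤ P * D :=
    mul_le_mul_of_nonneg_right hPge (le_of_lt hDpos)
  calc (t1 ^ a * t2 ^ l) * D ≤ P * D := hPN
  _ = D * P := by ring
  _ ≤ N := hNge

/-- Part (ii) of the main theorem. -/
lemma part_ii (a b c r : ℕ) (ha : 1 ≤ a) (hab : a ≤ b) (hc : c = a + b)
    (hr1 : a + b < r) (hr2 : r ≤ a + c) {p : ℝ} (hp0 : 0 < p) (hp1 : p < 1)
    (l h w : ℕ) (hl : c ≤ l) (hh : c ≤ h) (hw : c ≤ w) :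
    (1 - Real.exp (-(1/(2*(c:ℝ))) * p ^ (r - a) * (w : ℝ))) ^ b *
        (1 - Real.exp (-(1/(2*(c:ℝ))) * p ^ (r - (a + b)) * (w : ℝ))) ^ h ≤
      condProbOn p (block3 (l + 1) h w)
        (IntFilled3 a b c r (block3 (l + 1) h w))
        (IntFilled3 a b c r (block3 l h w)) := by
  have hc1 : 1 ≤ c := by omega
  set V := block3 (l+1) h w with hV
  set V1 := block3 l h w with hV1
  set Vf : ℤ → Finset (ℤ×ℤ×ℤ) :=
    fun i => if i = 0 then block3 l h w else row3 ((l:ℤ)+1) i w with hVf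
  set Ef : ℤ → Finset (ℤ×ℤ×ℤ) → Prop :=
    fun i A' => if i = 0 then IntFilled3 a b c r (block3 l h w) A'
      else RunE ((l:ℤ)+1) i (rowlen1 a b r i) w A' with hEf
  have hsub1 : V1 ⊆ V := by
    intro v hv
    obtain ⟨x, y, z⟩ := v
    rw [hV1, mem_block3] at hv
    rw [hV, mem_block3]
    push_cast
    refine ⟨⟨hv.1.1, by omega⟩, hv.2.1, hv.2.2⟩
  have hK1 : (Finset.Icc (0:ℤ) (h:ℤ)).biUnion Vf = V := by
    ext v
    obtain ⟨x, y, z⟩ := v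
    simp only [Finset.mem_biUnion, Finset.mem_Icc]
    constructor
    · rintro ⟨i, hi, hv⟩
      by_cases h0 : i = 0
      · rw [h0] at hv
        rw [hVf] at hv
        simp only [eq_self_iff_true, if_true] at hv
        rw [mem_block3] at hv
        rw [hV, mem_block3]
        push_cast
        refine ⟨⟨hv.1.1, by omega⟩, hv.2.1, hv.2.2⟩
      · rw [hVf] at hv
        simp only [if_neg h0] at hv
        rw [mem_row3] at hv
        obtain ⟨he1, he2, he3, he4⟩ := hv
        rw [hV, mem_block3]
        push_cast
        simp only at he1 he2 he3 he4
        refine ⟨⟨by omega, by omega⟩, ⟨by omega, by omega⟩, by omega, by omega⟩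
    · intro hv
      rw [hV, mem_block3] at hv
      push_cast at hv
      rcases le_or_gt x (l:ℤ) with hx | hx
      · refine ⟨0, ⟨le_refl 0, by omega⟩, ?_⟩
        rw [hVf]
        simp only [eq_self_iff_true, if_true]
        rw [mem_block3]
        exact ⟨⟨hv.1.1, hx⟩, hv.2.1, hv.2.2⟩
      · refine ⟨y, ⟨by omega, by omega⟩, ?_⟩
        rw [hVf]
        simp only [if_neg (by omega : ¬ y = 0)]
        rw [mem_row3]
        refine ⟨?_, rfl, ?_, ?_⟩
        · show x = (l:ℤ)+1
          omega
        · show (1:ℤ) ≤ z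
          exact hv.2.2.1
        · show z ≤ (w:ℤ)
          exact hv.2.2.2
  have hK2 : ∀ i ∈ Finset.Icc (0:ℤ) (h:ℤ), ∀ j ∈ Finset.Icc (0:ℤ) (h:ℤ), i ≠ j →
      Disjoint (Vf i) (Vf j) := by
    have hrow_blk : ∀ j : ℤ, j ≠ 0 → Disjoint (block3 l h w) (row3 ((l:ℤ)+1) j w) := by
      intro j hj
      rw [Finset.disjoint_left]
      intro v hv1 hv2
      obtain ⟨x, y, z⟩ := v
      rw [mem_block3] at hv1
      rw [mem_row3] at hv2
      have := hv2.1
      simp only at this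
      omega
    intro i _ j _ hij
    rw [hVf]
    by_cases h0i : i = 0 <;> by_cases h0j : j = 0
    · exact absurd (h0i.trans h0j.symm) hij
    · simp only [if_pos h0i, if_neg h0j]
      exact hrow_blk j h0j
    · simp only [if_neg h0i, if_pos h0j]
      exact (hrow_blk i h0i).symm
    · simp only [if_neg h0i, if_neg h0j]
      rw [Finset.disjoint_left]
      intro v hv1 hv2
      rw [mem_row3] at hv1 hv2
      exact hij (hv1.2.1.symm.trans hv2.2.1)
  have hK3 : ∀ A ∈ V.powerset, (∀ i ∈ Finset.Icc (0:ℤ) (h:ℤ), Ef i (A ∩ Vf i)) →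
      IntFilled3 a b c r V A ∧ IntFilled3 a b c r V1 A := by
    intro A _ hall
    have h0mem : (0:ℤ) ∈ Finset.Icc (0:ℤ) (h:ℤ) := by
      rw [Finset.mem_Icc]; constructor <;> omega
    have h0 := hall 0 h0mem
    rw [hEf] at h0
    simp only [eq_self_iff_true, if_true] at h0
    have hVf0 : Vf 0 = block3 l h w := by rw [hVf]; simp
    rw [hVf0] at h0
    have hF : IntFilled3 a b c r V1 A := by
      rw [hV1]
      exact (IntFilled3_inter (block3 l h w) A).mp h0
    refine ⟨?_, hF⟩
    have hsmall : (↑(block3 l h w) : Set (ℤ×ℤ×ℤ)) ⊆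
        closure3 a b c r (↑(block3 (l+1) h w)) (↑A) := by
      have heq : closure3 a b c r (↑(block3 l h w)) (↑A) = ↑(block3 l h w) := hF
      rw [← heq]
      apply closure3_mono_R
      exact_mod_cast hsub1
    have hseed : ∀ y : ℤ, 1 ≤ y → y ≤ (h:ℤ) → ∃ z0 : ℤ, 0 ≤ z0 ∧
        z0 + (rowlen1 a b r y : ℤ) ≤ (w:ℤ) ∧
        ∀ k : ℤ, 1 ≤ k → k ≤ (rowlen1 a b r y : ℤ) → (((l:ℤ)+1, y, z0+k) : ℤ×ℤ×ℤ) ∈ A := by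
      intro y hy1 hy2
      have hymem : y ∈ Finset.Icc (0:ℤ) (h:ℤ) := by rw [Finset.mem_Icc]; omega
      have hy := hall y hymem
      rw [hEf] at hy
      simp only [if_neg (by omega : ¬ y = 0)] at hy
      have hVfy : Vf y = row3 ((l:ℤ)+1) y w := by
        rw [hVf]; simp only [if_neg (by omega : ¬ y = 0)]
      rw [hVfy] at hy
      exact RunE_inter.mp hy
    exact fill_e1 a b c r ha hab hc hr1 hr2 l h w hl hh hw A hsmall hseed
  set N := probOn p V (fun A => IntFilled3 a b c r V A ∧ IntFilled3 a b c r V1 A) with hN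
  set D := probOn p V1 (fun A' => IntFilled3 a b c r (block3 l h w) A') with hD
  set P := ∏ y ∈ Finset.Icc (1:ℤ) (h:ℤ), probOn p (Vf y) (Ef y) with hP
  have hfam : probOn p V (fun A => ∀ i ∈ Finset.Icc (0:ℤ) (h:ℤ), Ef i (A ∩ Vf i)) = D * P := by
    rw [← hK1]
    rw [probOn_family (Finset.Icc (0:ℤ) (h:ℤ)) Vf hK2 Ef]
    have hIcc : Finset.Icc (0:ℤ) (h:ℤ) = insert 0 (Finset.Icc 1 (h:ℤ)) := by
      ext i
      simp only [Finset.mem_Icc, Finset.mem_insert]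
      omega
    have h0notin : (0:ℤ) ∉ Finset.Icc (1:ℤ) (h:ℤ) := by
      rw [Finset.mem_Icc]; omega
    rw [hIcc, Finset.prod_insert h0notin]
    have hVf0 : probOn p (Vf 0) (Ef 0) = D := rfl
    rw [hVf0]
  have hNge : D * P ≤ N := by
    rw [← hfam, hN]
    exact probOn_mono (le_of_lt hp0) (le_of_lt hp1)
      (fun A hA hfa => hK3 A hA hfa)
  have hDeq : probOn p V (fun A => IntFilled3 a b c r V1 A) = D := by
    rw [hD]
    have : probOn p V (fun A => IntFilled3 a b c r V1 A)
        = probOn p V (fun A => (fun A' => IntFilled3 a b c r (block3 l h w) A') (A ∩ V1)) := by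
      apply probOn_congr
      intro A _
      rw [hV1]
      exact (IntFilled3_inter (block3 l h w) A).symm
    rw [this, probOn_restrict hsub1]
  have hDpos : 0 < D := by
    rw [hD]
    exact probOn_pos hp0 hp1 (IntFilled3_self (block3 l h w))
  set t1 := 1 - Real.exp (-(1/(2*(c:ℝ))) * p ^ (r - a) * (w : ℝ)) with ht1
  set t2 := 1 - Real.exp (-(1/(2*(c:ℝ))) * p ^ (r - (a+b)) * (w : ℝ)) with ht2
  have ht10 : 0 ≤ t1 := texp_nonneg hp0 c (r-a) w hc1
  have ht20 : 0 ≤ t2 := texp_nonneg hp0 c (r-(a+b)) w hc1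
  have ht21 : t2 ≤ 1 := texp_le_one c (r-(a+b)) w
  have hrow : ∀ y : ℤ, 1 ≤ y → y ≤ (h:ℤ) →
      1 - Real.exp (-(1/(2*(c:ℝ))) * p ^ (rowlen1 a b r y) * (w : ℝ)) ≤
        probOn p (Vf y) (Ef y) := by
    intro y hy1 hy2
    have hVfy : Vf y = row3 ((l:ℤ)+1) y w := by
      rw [hVf]; simp only [if_neg (by omega : ¬ y = 0)]
    have hEfy : probOn p (Vf y) (Ef y) =
        probOn p (row3 ((l:ℤ)+1) y w) (RunE ((l:ℤ)+1) y (rowlen1 a b r y) w) := by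
      rw [hVfy]
      apply probOn_congr
      intro A' _
      rw [hEf]
      simp only [if_neg (by omega : ¬ y = 0)]
    rw [hEfy]
    have hs1 : 1 ≤ rowlen1 a b r y := by unfold rowlen1; split <;> omega
    have hsc : rowlen1 a b r y ≤ c := by unfold rowlen1; split <;> omega
    have hnum := run_numeric hp0 hp1 c (rowlen1 a b r y) w hs1 hsc hw hc1
    have hrp := row_prob (le_of_lt hp0) (le_of_lt hp1) ((l:ℤ)+1) y (rowlen1 a b r y) w hs1
      (le_trans hsc hw)
    linarith
  have hPge : t1 ^ b * t2 ^ h ≤ P := by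
    rw [hP]
    apply prod_split_bound b h (le_trans (by omega : b ≤ c) hh) t1 t2 ht10 ht20 ht21
    · intro y hy1 hy2
      have := hrow y hy1 (by omega)
      have hrl : rowlen1 a b r y = r - a := by unfold rowlen1; rw [if_pos hy2]
      rw [hrl] at this
      rw [ht1]
      exact this
    · intro y hy1 hy2
      have := hrow y (by omega) hy2
      have hrl : rowlen1 a b r y = r - (a+b) := by unfold rowlen1; rw [if_neg (by omega)]
      rw [hrl] at this
      rw [ht2]
      exact this
  unfold condProbOn
  rw [hDeq]
  rw [le_div_iff₀ hDpos]
  have hPN : (t1 ^ b * t2 ^ h) * D ≤ P * D :=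
    mul_le_mul_of_nonneg_right hPge (le_of_lt hDpos)
  calc (t1 ^ b * t2 ^ h) * D ≤ P * D := hPN
  _ = D * P := by ring
  _ ≤ N := hNge


/-- growth estimates (Lemma "Regime supercritical `e₁`-process") for
`c = a+b` and `a+b < r ≤ a+c`. -/
theorem stmt10 (a b c r : ℕ) (ha : 1 ≤ a) (hab : a ≤ b) (hbc : b ≤ c) (hc : c = a + b)
    (hr1 : a + b < r) (hr2 : r ≤ a + c) :
    ∃ κ p₀ : ℝ, 0 < κ ∧ 0 < p₀ ∧ ∀ p : ℝ, 0 < p → p < p₀ →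
      ∀ l h w : ℕ, c ≤ l → c ≤ h → c ≤ w →
        ((1 - Real.exp (-κ * p ^ (r - b) * (w : ℝ))) ^ a *
            (1 - Real.exp (-κ * p ^ (r - (a + b)) * (w : ℝ))) ^ l ≤
          condProbOn p (block3 l (h + 1) w)
            (IntFilled3 a b c r (block3 l (h + 1) w))
            (IntFilled3 a b c r (block3 l h w))) ∧
        ((1 - Real.exp (-κ * p ^ (r - a) * (w : ℝ))) ^ b *
            (1 - Real.exp (-κ * p ^ (r - (a + b)) * (w : ℝ))) ^ h ≤
          condProbOn p (block3 (l + 1) h w)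
            (IntFilled3 a b c r (block3 (l + 1) h w))
            (IntFilled3 a b c r (block3 l h w))) := by
  have hc1 : (0:ℝ) < (c:ℝ) := by exact_mod_cast (by omega : 0 < c)
  refine ⟨1/(2*(c:ℝ)), 1, by positivity, one_pos, ?_⟩
  intro p hp0 hp1 l h w hl hh hw
  constructor
  · have := part_i a b c r ha hab hc hr1 hr2 hp0 hp1 l h w hl hh hw
    convert this using 5 <;> ring
  · have := part_ii a b c r ha hab hc hr1 hr2 hp0 hp1 l h w hl hh hw
    convert this using 5 <;> ring
end

section
/- Fix an integer s ≥ 3 and set t = t_s. For N_s^{s,s}-bootstrap percolation on the square [k]×[k] with p-random initial set: (a) there exist constants ε₀ > 0, κ > 0 and p₀ > 0 such that for all 0 < p < p₀ and every integer k with p^{−(s−t−1)} ≤ k < ε₀·p^{−(s−t)}, one has ℙ_p(I^•([k]²)) ≥ 1 − exp(−κ·p^{α_s·(t+2)}·k^{t+2}); and (b) there exist constants κ' > 0 and p₁ > 0 such that for all 0 < p < p₁ and every integer k ≥ p^{−s}, one has ℙ_p(I^•([k]²)) ≥ 1 − exp(−κ'·k). -/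
open Finset
open scoped Classical

/-- The neighbourhood of `N_s^{s,s}`-bootstrap percolation in `ℤ²`. -/
noncomputable def nbhd2 (s : ℕ) : Finset (ℤ × ℤ) :=
  (((Finset.Icc (-(s : ℤ)) (s : ℤ)).erase 0).image fun i => ((i, 0) : ℤ × ℤ)) ∪
  (((Finset.Icc (-(s : ℤ)) (s : ℤ)).erase 0).image fun i => ((0, i) : ℤ × ℤ))

/-- The number of neighbours of `v` (within the region `R`) lying in the set `B`. -/
noncomputable def infCount2 (s : ℕ) (R B : Set (ℤ × ℤ)) (v : ℤ × ℤ) : ℕ :=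
  ((nbhd2 s).filter fun x => v + x ∈ R ∧ v + x ∈ B).card

/-- The `N_s^{s,s}`-bootstrap closure (threshold `r`) of `A ∩ R` inside the region `R`. -/
def closure2 (s r : ℕ) (R A : Set (ℤ × ℤ)) : Set (ℤ × ℤ) :=
  ⋂₀ {B : Set (ℤ × ℤ) | A ∩ R ⊆ B ∧ ∀ v ∈ R, r ≤ infCount2 s R B v → v ∈ B}

/-- The rectangle `[l] × [k] ⊆ ℤ²`. -/
noncomputable def rect2 (l k : ℕ) : Finset (ℤ × ℤ) :=
  (Finset.Icc (1 : ℤ) (l : ℤ)) ×ˢ (Finset.Icc (1 : ℤ) (k : ℤ))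

/-- `R` is internally filled by the initial set `A` under `N_s^{s,s}`-bootstrap percolation. -/
def IntFilled2 (s r : ℕ) (R A : Finset (ℤ × ℤ)) : Prop :=
  closure2 s r (↑R) (↑A) = (↑R : Set (ℤ × ℤ))

/-- The probability of the event `E` when each vertex of `V` is included in the initial
set independently with probability `p`. -/
noncomputable def probOn2 (p : ℝ) (V : Finset (ℤ × ℤ)) (E : Finset (ℤ × ℤ) → Prop) : ℝ :=
  ∑ A ∈ V.powerset, if E A then p ^ A.card * (1 - p) ^ (V.card - A.card) else 0

/-- `t_s = ⌈(√(9+8s) - 5)/2⌉`. -/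
noncomputable def tseq (s : ℕ) : ℕ := ⌈(Real.sqrt (9 + 8 * (s : ℝ)) - 5) / 2⌉₊

/-- `α_s = ((t_s+1)/(t_s+2)) * (s - t_s/2)`. -/
noncomputable def alphaseq (s : ℕ) : ℝ :=
  (((tseq s : ℝ) + 1) / ((tseq s : ℝ) + 2)) * ((s : ℝ) - (tseq s : ℝ) / 2)

-- ### geometry helpers

lemma mem_rect2 {k : ℕ} {v : ℤ × ℤ} :
    v ∈ rect2 k k ↔ (1 ≤ v.1 ∧ v.1 ≤ (k:ℤ)) ∧ (1 ≤ v.2 ∧ v.2 ≤ (k:ℤ)) := by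
  simp [rect2, Finset.mem_product, Finset.mem_Icc]

noncomputable def offH (e : ℤ) (l : ℕ) : Finset (ℤ × ℤ) := (Finset.Icc 1 (l:ℤ)).image fun d => (e*d, 0)
noncomputable def offV (e : ℤ) (i : ℕ) : Finset (ℤ × ℤ) := (Finset.Icc 1 (i:ℤ)).image fun d => (0, e*d)

lemma infect {s k : ℕ} {B : Set (ℤ×ℤ)}
    (hB : ∀ v ∈ (↑(rect2 k k) : Set (ℤ×ℤ)), s ≤ infCount2 s (↑(rect2 k k)) B v → v ∈ B)
    (x y : ℤ) (hx1 : 1 ≤ x) (hx2 : x ≤ (k:ℤ)) (hy1 : 1 ≤ y) (hy2 : y ≤ (k:ℤ))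
    (e f : ℤ) (he : e = 1 ∨ e = -1) (hf : f = 1 ∨ f = -1)
    (l i : ℕ) (hsum : l + i = s)
    (hh : ∀ d : ℤ, 1 ≤ d → d ≤ (l:ℤ) → (1 ≤ x + e*d ∧ x + e*d ≤ (k:ℤ)) ∧ (x + e*d, y) ∈ B)
    (hv : ∀ d : ℤ, 1 ≤ d → d ≤ (i:ℤ) → (1 ≤ y + f*d ∧ y + f*d ≤ (k:ℤ)) ∧ (x, y + f*d) ∈ B) :
    ((x,y) : ℤ×ℤ) ∈ B := by
  have he' : e ≠ 0 := by rcases he with h | h <;> simp [h]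
  have hf' : f ≠ 0 := by rcases hf with h | h <;> simp [h]
  have heabs : ∀ d : ℤ, 1 ≤ d → d ≤ (s:ℤ) → e*d ≠ 0 ∧ -(s:ℤ) ≤ e*d ∧ e*d ≤ (s:ℤ) := by
    intro d h1 h2
    rcases he with h | h <;> subst h <;>
      refine ⟨by simpa using (by omega : d ≠ 0), by omega, by omega⟩
  have hfabs : ∀ d : ℤ, 1 ≤ d → d ≤ (s:ℤ) → f*d ≠ 0 ∧ -(s:ℤ) ≤ f*d ∧ f*d ≤ (s:ℤ) := by
    intro d h1 h2
    rcases hf with h | h <;> subst h <;>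
      refine ⟨by simpa using (by omega : d ≠ 0), by omega, by omega⟩
  have hls : (l:ℤ) ≤ (s:ℤ) := by exact_mod_cast Nat.le.intro hsum
  have his : (i:ℤ) ≤ (s:ℤ) := by exact_mod_cast Nat.le.intro (by omega : i + l = s)
  have hmemv : ((x,y) : ℤ×ℤ) ∈ (↑(rect2 k k) : Set (ℤ×ℤ)) := by
    rw [Finset.mem_coe, mem_rect2]; exact ⟨⟨hx1, hx2⟩, ⟨hy1, hy2⟩⟩
  refine hB (x,y) hmemv ?_
  unfold infCount2
  have hsub : offH e l ∪ offV f i ⊆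
      (nbhd2 s).filter fun z => (x,y) + z ∈ (↑(rect2 k k) : Set (ℤ×ℤ)) ∧ (x,y) + z ∈ B := by
    intro z hz
    rw [Finset.mem_union] at hz
    rw [Finset.mem_filter]
    rcases hz with hz | hz
    · simp only [offH, Finset.mem_image, Finset.mem_Icc] at hz
      obtain ⟨d, ⟨hd1, hd2⟩, rfl⟩ := hz
      obtain ⟨hne, hlo, hhi⟩ := heabs d hd1 (le_trans hd2 hls)
      have hmem : ((e*d, (0:ℤ)) : ℤ×ℤ) ∈ nbhd2 s := by
        rw [nbhd2, Finset.mem_union]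
        left
        exact Finset.mem_image.mpr ⟨e*d, Finset.mem_erase.mpr ⟨hne, Finset.mem_Icc.mpr ⟨hlo, hhi⟩⟩, rfl⟩
      obtain ⟨⟨hb1, hb2⟩, hbB⟩ := hh d hd1 hd2
      refine ⟨hmem, ?_, ?_⟩
      · show ((x,y) + (e*d, 0)) ∈ (↑(rect2 k k) : Set (ℤ×ℤ))
        rw [Finset.mem_coe, mem_rect2]
        refine ⟨⟨by simpa using hb1, by simpa using hb2⟩, ⟨by simpa using hy1, by simpa using hy2⟩⟩
      · show ((x,y) + (e*d, 0)) ∈ B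
        have : ((x,y) + (e*d, 0) : ℤ×ℤ) = (x + e*d, y) := by simp [Prod.ext_iff]
        rw [this]; exact hbB
    · simp only [offV, Finset.mem_image, Finset.mem_Icc] at hz
      obtain ⟨d, ⟨hd1, hd2⟩, rfl⟩ := hz
      obtain ⟨hne, hlo, hhi⟩ := hfabs d hd1 (le_trans hd2 his)
      have hmem : (((0:ℤ), f*d) : ℤ×ℤ) ∈ nbhd2 s := by
        rw [nbhd2, Finset.mem_union]
        right
        exact Finset.mem_image.mpr ⟨f*d, Finset.mem_erase.mpr ⟨hne, Finset.mem_Icc.mpr ⟨hlo, hhi⟩⟩, rfl⟩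
      obtain ⟨⟨hb1, hb2⟩, hbB⟩ := hv d hd1 hd2
      refine ⟨hmem, ?_, ?_⟩
      · show ((x,y) + (0, f*d)) ∈ (↑(rect2 k k) : Set (ℤ×ℤ))
        rw [Finset.mem_coe, mem_rect2]
        refine ⟨⟨by simpa using hx1, by simpa using hx2⟩, ⟨by simpa using hb1, by simpa using hb2⟩⟩
      · show ((x,y) + (0, f*d)) ∈ B
        have : ((x,y) + (0, f*d) : ℤ×ℤ) = (x, y + f*d) := by simp [Prod.ext_iff]
        rw [this]; exact hbB
  have hdisj : Disjoint (offH e l) (offV f i) := by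
    rw [Finset.disjoint_left]
    intro z hz1 hz2
    simp only [offH, Finset.mem_image, Finset.mem_Icc] at hz1
    simp only [offV, Finset.mem_image, Finset.mem_Icc] at hz2
    obtain ⟨d, ⟨hd1, _⟩, rfl⟩ := hz1
    obtain ⟨d', ⟨hd1', _⟩, hz⟩ := hz2
    have : e * d = 0 := by
      have := congrArg Prod.fst hz
      simpa using this.symm
    exact absurd this (by rcases he with h | h <;> subst h <;> simpa using (by omega : d ≠ 0))
  have hcardH : (offH e l).card = l := by
    rw [offH, Finset.card_image_of_injective _ (fun a b hab => by
      simpa [Prod.ext_iff, he'] using hab)]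
    simp [Int.toNat_of_nonneg]
  have hcardV : (offV f i).card = i := by
    rw [offV, Finset.card_image_of_injective _ (fun a b hab => by
      simpa [Prod.ext_iff, hf'] using hab)]
    simp [Int.toNat_of_nonneg]
  calc s = l + i := hsum.symm
    _ = (offH e l ∪ offV f i).card := by rw [Finset.card_union_of_disjoint hdisj, hcardH, hcardV]
    _ ≤ _ := by
      refine le_trans (Finset.card_le_card hsub) (le_of_eq ?_)
      apply Finset.card_bij (fun z _ => z) <;> intro z hz <;>
        simp_all [Finset.mem_filter]

def RowFull (k : ℕ) (B : Set (ℤ×ℤ)) (y : ℤ) : Prop :=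
  ∀ x : ℤ, 1 ≤ x → x ≤ (k:ℤ) → ((x, y) : ℤ×ℤ) ∈ B

lemma row_fill {s k : ℕ} {B : Set (ℤ×ℤ)}
    (hB : ∀ v ∈ (↑(rect2 k k) : Set (ℤ×ℤ)), s ≤ infCount2 s (↑(rect2 k k)) B v → v ∈ B)
    (y : ℤ) (hy1 : 1 ≤ y) (hy2 : y ≤ (k:ℤ)) (l i : ℕ) (hsum : l + i = s) (hl : 1 ≤ l)
    (hvert : ∀ j : ℤ, 1 ≤ j → j ≤ (i:ℤ) → 1 ≤ y - j ∧ RowFull k B (y - j))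
    (a : ℤ) (ha1 : 1 ≤ a) (ha2 : a + l - 1 ≤ (k:ℤ))
    (hrun : ∀ x : ℤ, a ≤ x → x ≤ a + l - 1 → ((x, y) : ℤ×ℤ) ∈ B) :
    RowFull k B y := by
  have hvB : ∀ x : ℤ, 1 ≤ x → x ≤ (k:ℤ) → ∀ d : ℤ, 1 ≤ d → d ≤ (i:ℤ) →
      (1 ≤ y + (-1)*d ∧ y + (-1)*d ≤ (k:ℤ)) ∧ ((x, y + (-1)*d) : ℤ×ℤ) ∈ B := by
    intro x hx1 hx2 d hd1 hd2
    obtain ⟨hge, hrow⟩ := hvert d hd1 hd2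
    have heq : y + (-1)*d = y - d := by ring
    rw [heq]
    exact ⟨⟨hge, by omega⟩, hrow x hx1 hx2⟩
  have right : ∀ n : ℕ, ∀ x : ℤ, a ≤ x → x ≤ (k:ℤ) → x - a < n → ((x, y) : ℤ×ℤ) ∈ B := by
    intro n
    induction n with
    | zero => intro x h1 _ h3; omega
    | succ n ih =>
      intro x hax hxk hxn
      by_cases hcase : x ≤ a + l - 1
      · exact hrun x hax hcase
      · refine infect hB x y (by omega) hxk hy1 hy2 (-1) (-1) (Or.inr rfl) (Or.inr rfl)
          l i hsum ?_ (hvB x (by omega) hxk)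
        intro d hd1 hd2
        have heq : x + (-1)*d = x - d := by ring
        rw [heq]
        exact ⟨⟨by omega, by omega⟩, ih (x - d) (by omega) (by omega) (by omega)⟩
  have left : ∀ n : ℕ, ∀ x : ℤ, 1 ≤ x → x ≤ (k:ℤ) → a - x < n → ((x, y) : ℤ×ℤ) ∈ B := by
    intro n
    induction n with
    | zero =>
      intro x h1 h2 h3
      by_cases hcase : a ≤ x
      · refine right ((x - a).toNat + 1) x hcase h2 ?_
        have := Int.toNat_of_nonneg (show (0:ℤ) ≤ x - a by omega)
        omega
      · omega
    | succ n ih =>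
      intro x hx1 hxk hxn
      by_cases hcase : a ≤ x
      · refine right ((x - a).toNat + 1) x hcase hxk ?_
        have := Int.toNat_of_nonneg (show (0:ℤ) ≤ x - a by omega)
        omega
      · refine infect hB x y hx1 hxk hy1 hy2 1 (-1) (Or.inl rfl) (Or.inr rfl)
          l i hsum ?_ (hvB x hx1 hxk)
        intro d hd1 hd2
        have heq : x + 1*d = x + d := by ring
        rw [heq]
        exact ⟨⟨by omega, by omega⟩, ih (x + d) (by omega) (by omega) (by omega)⟩
  intro x hx1 hx2
  refine left ((a - x).toNat + 1) x hx1 hx2 ?_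
  rcases le_or_gt a x with h | h
  · have : (a - x).toNat = 0 := by omega
    omega
  · have := Int.toNat_of_nonneg (show (0:ℤ) ≤ a - x by omega)
    omega

lemma row_step_up {s k : ℕ} {B : Set (ℤ×ℤ)}
    (hB : ∀ v ∈ (↑(rect2 k k) : Set (ℤ×ℤ)), s ≤ infCount2 s (↑(rect2 k k)) B v → v ∈ B)
    (y : ℤ) (hy1 : 1 ≤ y) (hy2 : y ≤ (k:ℤ))
    (hvert : ∀ j : ℤ, 1 ≤ j → j ≤ (s:ℤ) → 1 ≤ y - j ∧ RowFull k B (y - j)) :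
    RowFull k B y := by
  intro x hx1 hx2
  refine infect hB x y hx1 hx2 hy1 hy2 1 (-1) (Or.inl rfl) (Or.inr rfl) 0 s (by omega)
    (by intro d hd1 hd2; omega) ?_
  intro d hd1 hd2
  obtain ⟨hge, hrow⟩ := hvert d hd1 hd2
  have heq : y + (-1)*d = y - d := by ring
  rw [heq]
  exact ⟨⟨hge, by omega⟩, hrow x hx1 hx2⟩

lemma row_step_down {s k : ℕ} {B : Set (ℤ×ℤ)}
    (hB : ∀ v ∈ (↑(rect2 k k) : Set (ℤ×ℤ)), s ≤ infCount2 s (↑(rect2 k k)) B v → v ∈ B)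
    (y : ℤ) (hy1 : 1 ≤ y) (hy2 : y ≤ (k:ℤ))
    (hvert : ∀ j : ℤ, 1 ≤ j → j ≤ (s:ℤ) → y + j ≤ (k:ℤ) ∧ RowFull k B (y + j)) :
    RowFull k B y := by
  intro x hx1 hx2
  refine infect hB x y hx1 hx2 hy1 hy2 1 1 (Or.inl rfl) (Or.inl rfl) 0 s (by omega)
    (by intro d hd1 hd2; omega) ?_
  intro d hd1 hd2
  obtain ⟨hle, hrow⟩ := hvert d hd1 hd2
  have heq : y + 1*d = y + d := by ring
  rw [heq]
  exact ⟨⟨by omega, hle⟩, hrow x hx1 hx2⟩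

lemma det_fill {s k : ℕ} (hs : 1 ≤ s) {B : Set (ℤ×ℤ)}
    (hB : ∀ v ∈ (↑(rect2 k k) : Set (ℤ×ℤ)), s ≤ infCount2 s (↑(rect2 k k)) B v → v ∈ B)
    (b : ℤ) (hb0 : 0 ≤ b) (hbk : b + s ≤ (k:ℤ))
    (a : ℕ → ℤ) (ha1 : ∀ i, i < s → 1 ≤ a i)
    (ha2 : ∀ i, i < s → a i + ((s - i : ℕ):ℤ) - 1 ≤ (k:ℤ))
    (hrun : ∀ i, i < s → ∀ x : ℤ, a i ≤ x → x ≤ a i + ((s - i : ℕ):ℤ) - 1 →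
      ((x, b + i + 1) : ℤ×ℤ) ∈ B) :
    ∀ x y : ℤ, 1 ≤ x → x ≤ (k:ℤ) → 1 ≤ y → y ≤ (k:ℤ) → ((x,y) : ℤ×ℤ) ∈ B := by
  have step1 : ∀ i, i < s → RowFull k B (b + i + 1) := by
    intro i
    induction i using Nat.strong_induction_on with
    | _ i ih =>
      intro his
      have hsi : ((s - i : ℕ):ℤ) = (s:ℤ) - (i:ℤ) := by
        have : i ≤ s := by omega
        push_cast [this]
        ring
      refine row_fill hB (b + i + 1) (by omega) (by omega) (s - i) i (by omega) (by omega)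
        ?_ (a i) (ha1 i his) (ha2 i his) (hrun i his)
      intro j hj1 hj2
      obtain ⟨m, rfl⟩ : ∃ m : ℕ, j = (m:ℤ) := ⟨j.toNat, (Int.toNat_of_nonneg (by omega)).symm⟩
      have hmi : m ≤ i := by exact_mod_cast hj2
      have heq : b + (i:ℤ) + 1 - (m:ℤ) = b + ((i - m : ℕ):ℤ) + 1 := by
        push_cast [hmi]
        ring
      rw [heq]
      refine ⟨by omega, ih (i - m) (by omega) (by omega)⟩
  have step2 : ∀ n : ℕ, ∀ y : ℤ, b + 1 ≤ y → y ≤ b + (s:ℤ) + n → y ≤ (k:ℤ) → RowFull k B y := by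
    intro n
    induction n with
    | zero =>
      intro y h1 h2 h3
      obtain ⟨m, hm⟩ : ∃ m : ℕ, y - b - 1 = (m:ℤ) :=
        ⟨(y - b - 1).toNat, (Int.toNat_of_nonneg (by omega)).symm⟩
      have hms : m < s := by omega
      have heq : y = b + (m:ℤ) + 1 := by omega
      rw [heq]
      exact step1 m hms
    | succ n ih =>
      intro y h1 h2 h3
      by_cases hc : y ≤ b + (s:ℤ) + n
      · exact ih y h1 hc h3
      · refine row_step_up hB y (by omega) h3 ?_
        intro j hj1 hj2
        refine ⟨by omega, ih (y - j) (by omega) (by omega) (by omega)⟩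
  have step3 : ∀ n : ℕ, ∀ y : ℤ, 1 ≤ y → b + 1 - n ≤ y → y ≤ (k:ℤ) → RowFull k B y := by
    intro n
    induction n with
    | zero =>
      intro y h1 h2 h3
      refine step2 (y - b - (s:ℤ)).toNat y (by omega) ?_ h3
      have := Int.self_le_toNat (y - b - (s:ℤ))
      omega
    | succ n ih =>
      intro y h1 h2 h3
      by_cases hc : b + 1 - n ≤ y
      · exact ih y h1 hc h3
      · refine row_step_down hB y h1 h3 ?_
        intro j hj1 hj2
        refine ⟨by omega, ih (y + j) (by omega) (by omega) (by omega)⟩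
  intro x y hx1 hx2 hy1 hy2
  refine step3 (b + 1 - y).toNat y hy1 ?_ hy2 x hx1 hx2
  have := Int.self_le_toNat (b + 1 - y)
  omega

lemma intFilled_of_runs {s k : ℕ} (hs : 1 ≤ s) (A : Finset (ℤ×ℤ))
    (b : ℤ) (hb0 : 0 ≤ b) (hbk : b + s ≤ (k:ℤ))
    (a : ℕ → ℤ) (ha1 : ∀ i, i < s → 1 ≤ a i)
    (ha2 : ∀ i, i < s → a i + ((s - i : ℕ):ℤ) - 1 ≤ (k:ℤ))
    (hrun : ∀ i, i < s → ∀ x : ℤ, a i ≤ x → x ≤ a i + ((s - i : ℕ):ℤ) - 1 →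
      ((x, b + i + 1) : ℤ×ℤ) ∈ A) :
    IntFilled2 s s (rect2 k k) A := by
  unfold IntFilled2 closure2
  apply subset_antisymm
  · exact Set.sInter_subset_of_mem ⟨Set.inter_subset_right, fun v hv _ => hv⟩
  · intro v hv
    rw [Set.mem_sInter]
    rintro B ⟨hAB, hBc⟩
    have hrunB : ∀ i, i < s → ∀ x : ℤ, a i ≤ x → x ≤ a i + ((s - i : ℕ):ℤ) - 1 →
        ((x, b + i + 1) : ℤ×ℤ) ∈ B := by
      intro i his x hx1 hx2
      refine hAB ⟨hrun i his x hx1 hx2, ?_⟩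
      rw [Finset.mem_coe, mem_rect2]
      have h1 : (1:ℤ) ≤ ((s - i : ℕ):ℤ) := by
        have : 1 ≤ s - i := by omega
        exact_mod_cast this
      exact ⟨⟨by linarith [ha1 i his], by linarith [ha2 i his]⟩,
        ⟨by omega, by omega⟩⟩
    rw [Finset.mem_coe, mem_rect2] at hv
    have := det_fill hs hBc b hb0 hbk a ha1 ha2 hrunB v.1 v.2 hv.1.1 hv.1.2 hv.2.1 hv.2.2
    simpa using this


lemma weight_total (p : ℝ) (V : Finset (ℤ × ℤ)) :
    ∑ A ∈ V.powerset, p ^ A.card * (1 - p) ^ (V.card - A.card) = 1 := by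
  have h := Finset.prod_add (fun _ : ℤ×ℤ => p) (fun _ => (1-p)) V
  simp only [add_sub_cancel, Finset.prod_const, one_pow] at h
  have h2 : ∀ A ∈ V.powerset, p ^ A.card * (1 - p) ^ (V.card - A.card)
      = p ^ A.card * (1-p) ^ (V \ A).card := by
    intro A hA
    rw [Finset.card_sdiff_of_subset (Finset.mem_powerset.mp hA)]
  rw [Finset.sum_congr rfl h2]
  exact h.symm

lemma probOn2_true (p : ℝ) (V : Finset (ℤ × ℤ)) :
    probOn2 p V (fun _ => True) = 1 := by
  unfold probOn2
  simp only [if_true]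
  exact weight_total p V

lemma probOn2_congr (p : ℝ) (V : Finset (ℤ × ℤ)) {E E' : Finset (ℤ × ℤ) → Prop}
    (h : ∀ A ⊆ V, (E A ↔ E' A)) : probOn2 p V E = probOn2 p V E' := by
  unfold probOn2
  refine Finset.sum_congr rfl ?_
  intro A hA
  rw [if_congr (h A (Finset.mem_powerset.mp hA)) rfl rfl]

lemma probOn2_mono (p : ℝ) (hp0 : 0 ≤ p) (hp1 : p ≤ 1) (V : Finset (ℤ × ℤ))
    {E E' : Finset (ℤ × ℤ) → Prop} (h : ∀ A ⊆ V, E A → E' A) :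
    probOn2 p V E ≤ probOn2 p V E' := by
  unfold probOn2
  refine Finset.sum_le_sum ?_
  intro A hA
  have hw : (0:ℝ) ≤ p ^ A.card * (1 - p) ^ (V.card - A.card) :=
    mul_nonneg (pow_nonneg hp0 _) (pow_nonneg (by linarith) _)
  by_cases hE : E A
  · rw [if_pos hE, if_pos (h A (Finset.mem_powerset.mp hA) hE)]
  · rw [if_neg hE]
    by_cases hE' : E' A
    · rw [if_pos hE']; exact hw
    · rw [if_neg hE']

lemma probOn2_not (p : ℝ) (V : Finset (ℤ × ℤ)) (E : Finset (ℤ × ℤ) → Prop) :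
    probOn2 p V (fun A => ¬ E A) = 1 - probOn2 p V E := by
  rw [eq_sub_iff_add_eq, ← weight_total p V]
  unfold probOn2
  rw [← Finset.sum_add_distrib]
  refine Finset.sum_congr rfl ?_
  intro A _
  by_cases hE : E A <;> simp [hE]

lemma probOn2_nonneg (p : ℝ) (hp0 : 0 ≤ p) (hp1 : p ≤ 1) (V : Finset (ℤ × ℤ))
    (E : Finset (ℤ × ℤ) → Prop) : 0 ≤ probOn2 p V E := by
  unfold probOn2
  refine Finset.sum_nonneg ?_
  intro A _
  by_cases hE : E A
  · rw [if_pos hE]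
    exact mul_nonneg (pow_nonneg hp0 _) (pow_nonneg (by linarith) _)
  · rw [if_neg hE]

lemma probOn2_le_one (p : ℝ) (hp0 : 0 ≤ p) (hp1 : p ≤ 1) (V : Finset (ℤ × ℤ))
    (E : Finset (ℤ × ℤ) → Prop) : probOn2 p V E ≤ 1 := by
  have h := probOn2_not p V E
  have h2 := probOn2_nonneg p hp0 hp1 V (fun A => ¬ E A)
  linarith

lemma probOn2_split (p : ℝ) {V₁ V₂ : Finset (ℤ × ℤ)} (hd : Disjoint V₁ V₂)
    (E₁ E₂ : Finset (ℤ × ℤ) → Prop) :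
    probOn2 p (V₁ ∪ V₂) (fun A => E₁ (A ∩ V₁) ∧ E₂ (A ∩ V₂)) =
      probOn2 p V₁ E₁ * probOn2 p V₂ E₂ := by
  unfold probOn2
  rw [Finset.sum_mul_sum, ← Finset.sum_product']
  refine Finset.sum_nbij' (fun A => (A ∩ V₁, A ∩ V₂)) (fun P => P.1 ∪ P.2) ?_ ?_ ?_ ?_ ?_
  · intro A hA
    simp only [Finset.mem_product, Finset.mem_powerset]
    exact ⟨Finset.inter_subset_right, Finset.inter_subset_right⟩
  · intro P hP
    simp only [Finset.mem_product, Finset.mem_powerset] at hP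
    exact Finset.mem_powerset.mpr (Finset.union_subset_union hP.1 hP.2)
  · intro A hA
    simp only [Finset.mem_powerset] at hA
    show A ∩ V₁ ∪ A ∩ V₂ = A
    rw [← Finset.inter_union_distrib_left]
    exact Finset.inter_eq_left.mpr hA
  · intro P hP
    simp only [Finset.mem_product, Finset.mem_powerset] at hP
    have e1 : P.1 ∩ V₁ = P.1 := Finset.inter_eq_left.mpr hP.1
    have e2 : P.2 ∩ V₂ = P.2 := Finset.inter_eq_left.mpr hP.2
    have d12 : P.2 ∩ V₁ = ∅ := Finset.disjoint_iff_inter_eq_empty.mp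
      (Finset.disjoint_of_subset_left hP.2 hd.symm)
    have d21 : P.1 ∩ V₂ = ∅ := Finset.disjoint_iff_inter_eq_empty.mp
      (Finset.disjoint_of_subset_left hP.1 hd)
    have : (P.1 ∪ P.2) ∩ V₁ = P.1 := by
      rw [Finset.union_inter_distrib_right, e1, d12, Finset.union_empty]
    have h2 : (P.1 ∪ P.2) ∩ V₂ = P.2 := by
      rw [Finset.union_inter_distrib_right, e2, d21, Finset.empty_union]
    simp [this, h2]
  · intro A hA
    simp only [Finset.mem_powerset] at hA
    have hA1 : A ∩ V₁ ⊆ V₁ := Finset.inter_subset_right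
    have hA2 : A ∩ V₂ ⊆ V₂ := Finset.inter_subset_right
    have hdisj : Disjoint (A ∩ V₁) (A ∩ V₂) :=
      Finset.disjoint_of_subset_left hA1 (Finset.disjoint_of_subset_right hA2 hd)
    have hunion : (A ∩ V₁) ∪ (A ∩ V₂) = A := by
      rw [← Finset.inter_union_distrib_left]
      exact Finset.inter_eq_left.mpr hA
    have hcard : A.card = (A ∩ V₁).card + (A ∩ V₂).card := by
      rw [← Finset.card_union_of_disjoint hdisj, hunion]
    have hcardV : (V₁ ∪ V₂).card = V₁.card + V₂.card := Finset.card_union_of_disjoint hd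
    have hsub : (V₁ ∪ V₂).card - ((A ∩ V₁).card + (A ∩ V₂).card) = (V₁.card - (A ∩ V₁).card) + (V₂.card - (A ∩ V₂).card) := by
      have l1 : (A ∩ V₁).card ≤ V₁.card := Finset.card_le_card hA1
      have l2 : (A ∩ V₂).card ≤ V₂.card := Finset.card_le_card hA2
      omega
    by_cases h1 : E₁ (A ∩ V₁) <;> by_cases h2 : E₂ (A ∩ V₂) <;>
      simp [h1, h2, hcard, hsub, pow_add] <;> ring

lemma probOn2_prod (p : ℝ) (V : Finset (ℤ×ℤ))
    (J : Finset ℕ) (W : ℕ → Finset (ℤ×ℤ)) (E : ℕ → Finset (ℤ×ℤ) → Prop)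
    (hWV : ∀ j ∈ J, W j ⊆ V)
    (hdisj : ∀ j ∈ J, ∀ j' ∈ J, j ≠ j' → Disjoint (W j) (W j')) :
    probOn2 p V (fun A => ∀ j ∈ J, E j (A ∩ W j)) = ∏ j ∈ J, probOn2 p (W j) (E j) := by
  induction J using Finset.induction generalizing V with
  | empty =>
    simp only [Finset.notMem_empty, false_implies, implies_true, Finset.prod_empty]
    exact probOn2_true p V
  | @insert a J ha ih =>
    have hWa : W a ⊆ V := hWV a (Finset.mem_insert_self a J)
    have hV : W a ∪ (V \ W a) = V := Finset.union_sdiff_of_subset hWa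
    have hcong : ∀ A ⊆ V, ((∀ j ∈ insert a J, E j (A ∩ W j)) ↔
        (E a (A ∩ W a) ∧ ∀ j ∈ J, E j ((A ∩ (V \ W a)) ∩ W j)) ) := by
      intro A hA
      rw [Finset.forall_mem_insert]
      have : ∀ j ∈ J, (A ∩ (V \ W a)) ∩ W j = A ∩ W j := by
        intro j hj
        have hj' : W j ⊆ V := hWV j (Finset.mem_insert_of_mem hj)
        have hdj : Disjoint (W a) (W j) := hdisj a (Finset.mem_insert_self a J) j
          (Finset.mem_insert_of_mem hj) (by rintro rfl; exact ha hj)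
        ext x
        simp only [Finset.mem_inter, Finset.mem_sdiff]
        constructor
        · rintro ⟨⟨hxA, _, _⟩, hxW⟩; exact ⟨hxA, hxW⟩
        · rintro ⟨hxA, hxW⟩
          exact ⟨⟨hxA, hj' hxW, fun hc => (Finset.disjoint_left.mp hdj) hc hxW⟩, hxW⟩
      constructor
      · rintro ⟨h1, h2⟩
        exact ⟨h1, fun j hj => by rw [this j hj]; exact h2 j hj⟩
      · rintro ⟨h1, h2⟩
        exact ⟨h1, fun j hj => by rw [← this j hj]; exact h2 j hj⟩
    rw [probOn2_congr p V hcong]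
    have hsplit := probOn2_split (p := p) (V₁ := W a) (V₂ := V \ W a)
      Finset.disjoint_sdiff (E a) (fun A' => ∀ j ∈ J, E j (A' ∩ W j))
    rw [hV] at hsplit
    rw [hsplit, Finset.prod_insert ha]
    congr 1
    refine ih (V \ W a) ?_ ?_
    · intro j hj
      refine Finset.subset_sdiff.mpr ⟨hWV j (Finset.mem_insert_of_mem hj), ?_⟩
      exact (hdisj a (Finset.mem_insert_self a J) j (Finset.mem_insert_of_mem hj)
        (by rintro rfl; exact ha hj)).symm
    · intro j hj j' hj' hne
      exact hdisj j (Finset.mem_insert_of_mem hj) j' (Finset.mem_insert_of_mem hj') hne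

lemma probOn2_subset_self (p : ℝ) (S : Finset (ℤ×ℤ)) :
    probOn2 p S (fun A => S ⊆ A) = p ^ S.card := by
  unfold probOn2
  rw [Finset.sum_eq_single_of_mem S (Finset.mem_powerset_self S)]
  · rw [if_pos (Finset.Subset.refl S), Nat.sub_self, pow_zero, mul_one]
  · intro A hA hne
    rw [if_neg]
    intro hSA
    exact hne (Finset.Subset.antisymm (Finset.mem_powerset.mp hA) hSA)

lemma probOn2_not_subset_self (p : ℝ) (S : Finset (ℤ×ℤ)) :
    probOn2 p S (fun A => ¬ S ⊆ A) = 1 - p ^ S.card := by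
  rw [probOn2_not, probOn2_subset_self]


-- ### windows and bands

noncomputable def win (s k : ℕ) (j i w : ℕ) : Finset (ℤ × ℤ) :=
  (Finset.Icc ((w*s+1 : ℕ) : ℤ) ((w*s + (s - i) : ℕ) : ℤ)) ×ˢ {((j*s+i+1 : ℕ) : ℤ)}

noncomputable def rowF (k : ℕ) (y : ℕ) : Finset (ℤ × ℤ) :=
  (Finset.Icc (1:ℤ) (k:ℤ)) ×ˢ {((y:ℕ) : ℤ)}

noncomputable def bandF (s k : ℕ) (j : ℕ) : Finset (ℤ × ℤ) :=
  (Finset.Icc (1:ℤ) (k:ℤ)) ×ˢ (Finset.Icc ((j*s+1 : ℕ) : ℤ) ((j*s+s : ℕ) : ℤ))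

def RowG (s k N j i : ℕ) (A : Finset (ℤ × ℤ)) : Prop :=
  ∀ w ∈ Finset.range N, ¬ (win s k j i w ⊆ A)

def BandG (s k N j : ℕ) (A : Finset (ℤ × ℤ)) : Prop :=
  ∀ i ∈ Finset.range s, RowG s k N j i (A ∩ rowF k (j*s+i+1))

lemma card_win {s k : ℕ} (j i w : ℕ) (hi : i < s) : (win s k j i w).card = s - i := by
  rw [win, Finset.card_product, Finset.card_singleton, mul_one, Int.card_Icc]
  have h1 : 1 ≤ s - i := by omega
  push_cast
  omega

lemma win_subset_row {s k : ℕ} {j i w N : ℕ} (hi : i < s) (hw : w < N) (hNs : N*s ≤ k) :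
    win s k j i w ⊆ rowF k (j*s+i+1) := by
  intro z hz
  rw [win, Finset.mem_product, Finset.mem_Icc, Finset.mem_singleton] at hz
  rw [rowF, Finset.mem_product, Finset.mem_Icc, Finset.mem_singleton]
  have hwk : w*s + s ≤ k := by
    calc w*s + s = (w+1)*s := by ring
    _ ≤ N*s := Nat.mul_le_mul_right s hw
    _ ≤ k := hNs
  refine ⟨⟨?_, ?_⟩, hz.2⟩
  · have : (1:ℤ) ≤ ((w*s+1 : ℕ) : ℤ) := by push_cast; omega
    omega
  · have : ((w*s + (s-i) : ℕ) : ℤ) ≤ (k:ℤ) := by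
      have : w*s + (s-i) ≤ k := by omega
      exact_mod_cast this
    omega

lemma row_subset_band {s k : ℕ} {j i : ℕ} (hi : i < s) :
    rowF k (j*s+i+1) ⊆ bandF s k j := by
  intro z hz
  rw [rowF, Finset.mem_product, Finset.mem_singleton] at hz
  rw [bandF, Finset.mem_product]
  refine ⟨hz.1, Finset.mem_Icc.mpr ⟨?_, ?_⟩⟩ <;> rw [hz.2] <;> push_cast <;> omega

lemma band_subset_rect {s k N : ℕ} {j : ℕ} (hj : j < N) (hNs : N*s ≤ k) :
    bandF s k j ⊆ rect2 k k := by
  intro z hz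
  simp only [bandF, Finset.mem_product, Finset.mem_Icc] at hz
  rw [mem_rect2]
  have hjk : j*s + s ≤ k := by
    calc j*s + s = (j+1)*s := by ring
    _ ≤ N*s := Nat.mul_le_mul_right s hj
    _ ≤ k := hNs
  obtain ⟨⟨h1, h2⟩, h3, h4⟩ := hz
  refine ⟨⟨h1, h2⟩, ?_, ?_⟩
  · have : (1:ℤ) ≤ ((j*s+1 : ℕ) : ℤ) := by push_cast; omega
    omega
  · have : ((j*s+s : ℕ) : ℤ) ≤ (k:ℤ) := by exact_mod_cast hjk
    omega

lemma win_disjoint {s k : ℕ} {j i : ℕ} (hs : 1 ≤ s) {w w' : ℕ} (hne : w ≠ w') :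
    Disjoint (win s k j i w) (win s k j i w') := by
  rw [Finset.disjoint_left]
  intro z hz hz'
  rw [win, Finset.mem_product, Finset.mem_Icc] at hz hz'
  rcases Nat.lt_or_ge w w' with h | h
  · have h1 : w*s + (s-i) ≤ w'*s := by
      have e1 : (w+1)*s ≤ w'*s := Nat.mul_le_mul_right s h
      have e2 : (w+1)*s = w*s + s := by ring
      have h2 : s - i ≤ s := Nat.sub_le s i
      omega
    have c1 : z.1 ≤ ((w*s + (s-i) : ℕ) : ℤ) := hz.1.2
    have c2 : ((w'*s+1 : ℕ) : ℤ) ≤ z.1 := hz'.1.1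
    have : ((w*s + (s-i) : ℕ) : ℤ) < ((w'*s+1 : ℕ) : ℤ) := by exact_mod_cast Nat.lt_succ_of_le h1
    omega
  · have h' : w' < w := by omega
    have h1 : w'*s + (s-i) ≤ w*s := by
      have e1 : (w'+1)*s ≤ w*s := Nat.mul_le_mul_right s h'
      have e2 : (w'+1)*s = w'*s + s := by ring
      have h2 : s - i ≤ s := Nat.sub_le s i
      omega
    have c1 : z.1 ≤ ((w'*s + (s-i) : ℕ) : ℤ) := hz'.1.2
    have c2 : ((w*s+1 : ℕ) : ℤ) ≤ z.1 := hz.1.1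
    have : ((w'*s + (s-i) : ℕ) : ℤ) < ((w*s+1 : ℕ) : ℤ) := by exact_mod_cast Nat.lt_succ_of_le h1
    omega

lemma row_disjoint {s k : ℕ} {j : ℕ} {i i' : ℕ} (hi : i < s) (hi' : i' < s) (hne : i ≠ i') :
    Disjoint (rowF k (j*s+i+1)) (rowF k (j*s+i'+1)) := by
  rw [Finset.disjoint_left]
  intro z hz hz'
  rw [rowF, Finset.mem_product, Finset.mem_singleton] at hz hz'
  apply hne
  have := hz.2 ▸ hz'.2
  have h2 : ((j*s+i+1 : ℕ) : ℤ) = ((j*s+i'+1 : ℕ) : ℤ) := by rw [← hz.2, ← hz'.2]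
  have : (j*s+i+1 : ℕ) = (j*s+i'+1 : ℕ) := by exact_mod_cast h2
  omega

lemma band_disjoint {s k : ℕ} (hs : 1 ≤ s) {j j' : ℕ} (hne : j ≠ j') :
    Disjoint (bandF s k j) (bandF s k j') := by
  rw [Finset.disjoint_left]
  intro z hz hz'
  simp only [bandF, Finset.mem_product, Finset.mem_Icc] at hz hz'
  rcases Nat.lt_or_ge j j' with h | h
  · have h1 : j*s + s ≤ j'*s := by
      have e1 : (j+1)*s ≤ j'*s := Nat.mul_le_mul_right s h
      have e2 : (j+1)*s = j*s + s := by ring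
      omega
    have c1 : z.2 ≤ ((j*s+s : ℕ) : ℤ) := hz.2.2
    have c2 : ((j'*s+1 : ℕ) : ℤ) ≤ z.2 := hz'.2.1
    have : ((j*s+s : ℕ) : ℤ) < ((j'*s+1 : ℕ) : ℤ) := by exact_mod_cast Nat.lt_succ_of_le h1
    omega
  · have h' : j' < j := by omega
    have h1 : j'*s + s ≤ j*s := by
      have e1 : (j'+1)*s ≤ j*s := Nat.mul_le_mul_right s h'
      have e2 : (j'+1)*s = j'*s + s := by ring
      omega
    have c1 : z.2 ≤ ((j'*s+s : ℕ) : ℤ) := hz'.2.2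
    have c2 : ((j*s+1 : ℕ) : ℤ) ≤ z.2 := hz.2.1
    have : ((j'*s+s : ℕ) : ℤ) < ((j*s+1 : ℕ) : ℤ) := by exact_mod_cast Nat.lt_succ_of_le h1
    omega

-- ### probability of the pattern events

lemma prob_row_bad {s k N : ℕ} (p : ℝ) (j i : ℕ) (hi : i < s) (hNs : N*s ≤ k) :
    probOn2 p (rowF k (j*s+i+1)) (RowG s k N j i) = (1 - p^(s-i))^N := by
  have hcong : ∀ A ⊆ rowF k (j*s+i+1), (RowG s k N j i A ↔
      ∀ w ∈ Finset.range N, (fun A' => ¬ (win s k j i w ⊆ A')) (A ∩ win s k j i w)) := by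
    intro A _
    unfold RowG
    refine forall₂_congr ?_
    intro w _
    simp only [not_iff_not, Finset.subset_inter_iff]
    exact ⟨fun h => ⟨h, Finset.Subset.refl _⟩, fun h => h.1⟩
  rw [probOn2_congr p _ hcong]
  rw [probOn2_prod p _ (Finset.range N) (fun w => win s k j i w)
    (fun w A' => ¬ (win s k j i w ⊆ A'))
    (fun w hw => win_subset_row hi (Finset.mem_range.mp hw) hNs)
    (fun w _ w' _ hne => win_disjoint (by omega) hne)]
  rw [Finset.prod_congr rfl (fun w _ => probOn2_not_subset_self p (win s k j i w))]
  rw [Finset.prod_congr rfl (fun w _ => by rw [card_win j i w hi])]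
  rw [Finset.prod_const, Finset.card_range]

def BandGood (s k N j : ℕ) (A : Finset (ℤ × ℤ)) : Prop :=
  ∀ i ∈ Finset.range s, ¬ RowG s k N j i (A ∩ rowF k (j*s+i+1))

lemma prob_band_good {s k N : ℕ} (p : ℝ) (j : ℕ) (hNs : N*s ≤ k) :
    probOn2 p (bandF s k j) (BandGood s k N j) =
      ∏ i ∈ Finset.range s, (1 - (1 - p^(s-i))^N) := by
  unfold BandGood
  rw [probOn2_prod p _ (Finset.range s) (fun i => rowF k (j*s+i+1))
    (fun i A' => ¬ RowG s k N j i A')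
    (fun i hi => row_subset_band (Finset.mem_range.mp hi))
    (fun i hi i' hi' hne => row_disjoint (Finset.mem_range.mp hi) (Finset.mem_range.mp hi') hne)]
  refine Finset.prod_congr rfl ?_
  intro i hi
  rw [probOn2_not, prob_row_bad p j i (Finset.mem_range.mp hi) hNs]

lemma prob_all_bands_bad {s k N : ℕ} (hs : 1 ≤ s) (p : ℝ) (hNs : N*s ≤ k) :
    probOn2 p (rect2 k k) (fun A => ∀ j ∈ Finset.range N, ¬ BandGood s k N j (A ∩ bandF s k j)) =
      (1 - ∏ i ∈ Finset.range s, (1 - (1 - p^(s-i))^N))^N := by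
  rw [probOn2_prod p _ (Finset.range N) (fun j => bandF s k j)
    (fun j A' => ¬ BandGood s k N j A')
    (fun j hj => band_subset_rect (Finset.mem_range.mp hj) hNs)
    (fun j _ j' _ hne => band_disjoint hs hne)]
  rw [Finset.prod_congr rfl (fun j _ => by
    rw [probOn2_not, prob_band_good p j hNs])]
  rw [Finset.prod_const, Finset.card_range]

lemma fill_of_good {s k N : ℕ} (hs : 1 ≤ s) (hNs : N*s ≤ k) (A : Finset (ℤ × ℤ))
    (h : ¬ ∀ j ∈ Finset.range N, ¬ BandGood s k N j (A ∩ bandF s k j)) :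
    IntFilled2 s s (rect2 k k) A := by
  push_neg at h
  obtain ⟨j, hj, hband⟩ := h
  rw [Finset.mem_range] at hj
  unfold BandGood at hband
  have hrows : ∀ i, i < s → ∃ w, w < N ∧ win s k j i w ⊆ A := by
    intro i hi
    have := hband i (Finset.mem_range.mpr hi)
    unfold RowG at this
    push_neg at this
    obtain ⟨w, hw, hsub⟩ := this
    exact ⟨w, Finset.mem_range.mp hw, hsub.trans (Finset.inter_subset_left.trans
      Finset.inter_subset_left)⟩
  have hrows' : ∀ i : ℕ, ∃ w : ℕ, i < s → (w < N ∧ win s k j i w ⊆ A) := by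
    intro i
    by_cases hi : i < s
    · obtain ⟨w, hw⟩ := hrows i hi
      exact ⟨w, fun _ => hw⟩
    · exact ⟨0, fun hc => absurd hc hi⟩
  choose w hw using hrows'
  have hNk : N*s ≤ k := hNs
  have hjs : (j+1)*s ≤ N*s := Nat.mul_le_mul_right s hj
  refine intFilled_of_runs hs A ((j*s : ℕ) : ℤ) (by positivity) ?_
    (fun i => ((w i * s + 1 : ℕ) : ℤ)) ?_ ?_ ?_
  · have : j*s + s ≤ k := by
      have : (j+1)*s = j*s + s := by ring
      omega
    push_cast
    exact_mod_cast (by exact_mod_cast this : ((j*s + s : ℕ):ℤ) ≤ (k:ℤ))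
  · intro i hi
    have : (1:ℤ) ≤ ((w i * s + 1 : ℕ) : ℤ) := by exact_mod_cast Nat.one_le_iff_ne_zero.mpr (by omega)
    exact this
  · intro i hi
    obtain ⟨hwN, _⟩ := hw i hi
    have hb : w i * s + (s - i) ≤ k := by
      have h1 : (w i + 1)*s ≤ N*s := Nat.mul_le_mul_right s hwN
      have h2 : (w i + 1)*s = w i * s + s := by ring
      have h3 : s - i ≤ s := Nat.sub_le s i
      omega
    have : ((w i * s + 1 : ℕ) : ℤ) + ((s - i : ℕ) : ℤ) - 1 = ((w i * s + (s-i) : ℕ) : ℤ) := by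
      push_cast
      ring
    rw [this]
    exact_mod_cast hb
  · intro i hi x hx1 hx2
    obtain ⟨hwN, hsub⟩ := hw i hi
    have hcell : (x, (((j*s+i+1 : ℕ)) : ℤ)) ∈ win s k j i (w i) := by
      rw [win, Finset.mem_product, Finset.mem_Icc, Finset.mem_singleton]
      refine ⟨⟨hx1, ?_⟩, rfl⟩
      push_cast [Nat.cast_sub hi.le] at hx2 ⊢
      linarith
    have heq : (((j*s : ℕ) : ℤ) + (i:ℤ) + 1) = ((j*s+i+1 : ℕ) : ℤ) := by push_cast; ring
    rw [heq]
    exact hsub hcell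

-- ### analytic lemmas

lemma one_sub_pow_le_inv {x : ℝ} (h0 : 0 ≤ x) (h1 : x ≤ 1) (n : ℕ) :
    (1 - x)^n ≤ 1/(1 + n*x) := by
  have hpos : (0:ℝ) < 1 + n*x := by positivity
  have h2 : (1 - x) ≤ 1/(1+x) := by
    rw [le_div_iff₀ (by linarith)]
    nlinarith
  have h3 : (1-x)^n ≤ (1/(1+x))^n := pow_le_pow_left₀ (by linarith) h2 n
  have h4 : (1:ℝ) + n*x ≤ (1+x)^n := by
    have := one_add_mul_le_pow (a := x) (by linarith) n
    linarith
  calc (1-x)^n ≤ (1/(1+x))^n := h3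
    _ = 1/(1+x)^n := by rw [div_pow, one_pow]
    _ ≤ 1/(1+n*x) := one_div_le_one_div_of_le hpos h4

lemma one_sub_pow_ge {x β : ℝ} (h0 : 0 ≤ x) (h1 : x ≤ 1) {n : ℕ} (hβ0 : 0 ≤ β)
    (hβ : β ≤ n*x) : β/(1+β) ≤ 1 - (1-x)^n := by
  have h2 := one_sub_pow_le_inv h0 h1 n
  have hb1 : (0:ℝ) < 1 + β := by linarith
  have hb2 : (0:ℝ) < 1 + n*x := by linarith
  have h3 : 1/(1+n*x) ≤ 1/(1+β) := one_div_le_one_div_of_le hb1 (by linarith)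
  have h4 : β/(1+β) = 1 - 1/(1+β) := by field_simp; ring
  rw [h4]
  linarith

lemma one_sub_pow_ge_half {x : ℝ} (h0 : 0 ≤ x) (h1 : x ≤ 1) {n : ℕ}
    (hn : (n:ℝ)*x ≤ 1/2) : (n:ℝ)*x/2 ≤ 1 - (1-x)^n := by
  have hnx : 0 ≤ (n:ℝ)*x := by positivity
  have h2 := one_sub_pow_ge h0 h1 hnx (le_refl ((n:ℝ)*x))
  have h3 : (n:ℝ)*x/2 ≤ (n:ℝ)*x/(1+(n:ℝ)*x) := by
    apply div_le_div_of_nonneg_left hnx (by linarith) (by linarith)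
  linarith

lemma pow_le_exp_neg {Q : ℝ} (h0 : 0 ≤ Q) (h1 : Q ≤ 1) (N : ℕ) :
    (1-Q)^N ≤ Real.exp (-((N:ℝ)*Q)) := by
  have h2 : 1 - Q ≤ Real.exp (-Q) := by
    have := Real.add_one_le_exp (-Q)
    linarith
  calc (1-Q)^N ≤ (Real.exp (-Q))^N := pow_le_pow_left₀ (by linarith) h2 N
    _ = Real.exp (-((N:ℝ)*Q)) := by
        rw [← Real.exp_nat_mul]
        ring_nf

lemma tseq_le (s : ℕ) (hs : 3 ≤ s) : tseq s ≤ s - 2 := by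
  rw [tseq, Nat.ceil_le]
  have hsr : (3:ℝ) ≤ (s:ℝ) := by exact_mod_cast hs
  have hcast : (((s - 2 : ℕ)) : ℝ) = (s:ℝ) - 2 := by
    have : 2 ≤ s := by omega
    push_cast [this]
    ring
  rw [hcast]
  have hsq : Real.sqrt (9 + 8*(s:ℝ)) ≤ 2*(s:ℝ) + 1 := by
    have h1 : Real.sqrt (9 + 8*(s:ℝ)) ≤ Real.sqrt ((2*(s:ℝ)+1)^2) :=
      Real.sqrt_le_sqrt (by nlinarith)
    have h2 : Real.sqrt ((2*(s:ℝ)+1)^2) = 2*(s:ℝ)+1 := Real.sqrt_sq (by linarith)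
    linarith
  linarith

lemma tseq_pos (s : ℕ) (hs : 3 ≤ s) : 1 ≤ tseq s := by
  rw [tseq, Nat.one_le_ceil_iff]
  have hsr : (3:ℝ) ≤ (s:ℝ) := by exact_mod_cast hs
  have hsq : (5:ℝ) < Real.sqrt (9 + 8*(s:ℝ)) := by
    rw [show (5:ℝ) = Real.sqrt 25 by rw [show (25:ℝ) = 5^2 by norm_num, Real.sqrt_sq]; norm_num]
    apply Real.sqrt_lt_sqrt (by norm_num)
    linarith
  linarith

lemma alphaseq_mul (s : ℕ) (hs : 3 ≤ s) :
    alphaseq s * ((tseq s : ℝ) + 2) =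
      ((∑ i ∈ Finset.range (tseq s + 1), (s - i) : ℕ) : ℝ) := by
  set t := tseq s with ht
  have hts : t ≤ s - 2 := tseq_le s hs
  have hcast : ((∑ i ∈ Finset.range (t+1), (s-i) : ℕ) : ℝ)
      = ∑ i ∈ Finset.range (t+1), ((s:ℝ) - (i:ℝ)) := by
    rw [Nat.cast_sum]
    refine Finset.sum_congr rfl ?_
    intro i hi
    rw [Finset.mem_range] at hi
    have : i ≤ s := by omega
    push_cast [this]
    ring
  rw [hcast, Finset.sum_sub_distrib, Finset.sum_const, Finset.card_range]
  have hg : (∑ i ∈ Finset.range (t+1), (i:ℝ)) = (t:ℝ)*((t:ℝ)+1)/2 := by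
    have h2 := Finset.sum_range_id_mul_two (t+1)
    have h3 : ((∑ i ∈ Finset.range (t+1), i : ℕ) : ℝ) * 2 = (((t+1)*t : ℕ) : ℝ) := by
      exact_mod_cast congrArg (fun n : ℕ => (n:ℝ)) h2
    push_cast at h3 ⊢
    linarith
  rw [hg]
  have h2 : ((t:ℝ)+2) ≠ 0 := by positivity
  rw [alphaseq, ← ht]
  field_simp
  ring

lemma main_bound {s k N : ℕ} (hs : 1 ≤ s) (hNs : N*s ≤ k) (p : ℝ) (hp0 : 0 < p) (hp1 : p ≤ 1) :
    1 - Real.exp (-((N:ℝ) * (∏ i ∈ Finset.range s, (1 - (1 - p^(s-i))^N)))) ≤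
      probOn2 p (rect2 k k) (IntFilled2 s s (rect2 k k)) := by
  set Q := ∏ i ∈ Finset.range s, (1 - (1 - p^(s-i))^N) with hQ
  have hfac : ∀ i ∈ Finset.range s, 0 ≤ 1 - (1 - p^(s-i))^N ∧ 1 - (1 - p^(s-i))^N ≤ 1 := by
    intro i _
    have hx0 : 0 < p^(s-i) := pow_pos hp0 _
    have hx1 : p^(s-i) ≤ 1 := pow_le_one₀ hp0.le hp1
    constructor
    · have h1 : (1 - p^(s-i))^N ≤ 1 := pow_le_one₀ (by linarith) (by linarith)
      linarith
    · have h2 : 0 ≤ (1 - p^(s-i))^N := pow_nonneg (by linarith) N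
      linarith
  have hQ0 : 0 ≤ Q := Finset.prod_nonneg (fun i hi => (hfac i hi).1)
  have hQ1 : Q ≤ 1 := Finset.prod_le_one (fun i hi => (hfac i hi).1) (fun i hi => (hfac i hi).2)
  have hmono := probOn2_mono p hp0.le hp1 (rect2 k k)
    (E := fun A => ¬ (∀ j ∈ Finset.range N, ¬ BandGood s k N j (A ∩ bandF s k j)))
    (E' := IntFilled2 s s (rect2 k k))
    (fun A _ hE => fill_of_good hs hNs A hE)
  have heq : probOn2 p (rect2 k k)
      (fun A => ¬ (∀ j ∈ Finset.range N, ¬ BandGood s k N j (A ∩ bandF s k j))) = 1 - (1-Q)^N := by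
    rw [probOn2_not, prob_all_bands_bad hs p hNs]
  have hexp : (1-Q)^N ≤ Real.exp (-((N:ℝ)*Q)) := pow_le_exp_neg hQ0 hQ1 N
  calc 1 - Real.exp (-((N:ℝ)*Q)) ≤ 1 - (1-Q)^N := by linarith
    _ ≤ _ := heq ▸ hmono

lemma part_b (s : ℕ) (hs : 3 ≤ s) :
    ∃ κ' p₁ : ℝ, 0 < κ' ∧ 0 < p₁ ∧ ∀ p : ℝ, 0 < p → p < p₁ →
      ∀ k : ℕ, p ^ (-(s : ℝ)) ≤ (k : ℝ) →
        1 - Real.exp (-κ' * (k : ℝ)) ≤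
          probOn2 p (rect2 k k) (IntFilled2 s s (rect2 k k)) := by
  have hsr : (3:ℝ) ≤ (s:ℝ) := by exact_mod_cast hs
  set c : ℝ := 1/(2*(s:ℝ)+1) with hc
  have hc0 : 0 < c := by rw [hc]; positivity
  refine ⟨c^s / (2*(s:ℝ)), 1/(4*(s:ℝ)), by positivity, by positivity, ?_⟩
  intro p hp0 hp1 k hk
  have hp1' : p ≤ 1 := by
    have : 1/(4*(s:ℝ)) ≤ 1 := by
      rw [div_le_one (by linarith)]
      linarith
    linarith
  -- convert the rpow hypothesis
  have hpow : (0:ℝ) < p^s := pow_pos hp0 s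
  have hk' : (p^s)⁻¹ ≤ (k:ℝ) := by
    have : p ^ (-(s:ℝ)) = (p^s)⁻¹ := by
      rw [← Real.rpow_natCast p s, ← Real.rpow_neg hp0.le]
    linarith [hk, this ▸ hk]
  have hks : 1 ≤ (k:ℝ) * p^s := by
    have := mul_le_mul_of_nonneg_right hk' hpow.le
    rwa [inv_mul_cancel₀ hpow.ne'] at this
  have hkreal : 4*(s:ℝ) < (k:ℝ) := by
    have h1 : p^s ≤ p := by
      calc p^s ≤ p^1 := pow_le_pow_of_le_one hp0.le hp1' (by omega)
      _ = p := pow_one p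
    have h2 : p⁻¹ ≤ (p^s)⁻¹ := by
      have := one_div_le_one_div_of_le hpow h1
      rwa [one_div, one_div] at this
    have h3 : 4*(s:ℝ) < p⁻¹ := by
      rw [lt_inv_comm₀ (by positivity) hp0]
      calc p < 1/(4*(s:ℝ)) := hp1
      _ = (4*(s:ℝ))⁻¹ := one_div _
    linarith
  set N := k / s with hN
  have hNs : N*s ≤ k := Nat.div_mul_le_self k s
  have hsk : s ≤ k := by
    have : (s:ℝ) < (k:ℝ) := by linarith
    exact_mod_cast this.le
  have hN1 : 1 ≤ N := (Nat.one_le_div_iff (by omega)).mpr hsk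
  have hkN : (k:ℝ) ≤ 2*(s:ℝ)*(N:ℝ) := by
    have h1 : s * N + k % s = k := by rw [hN]; exact Nat.div_add_mod k s
    have h2 : k % s < s := Nat.mod_lt k (by omega)
    have h3 : s ≤ N*s := Nat.le_mul_of_pos_left s (by omega)
    have hcomm : s*N = N*s := Nat.mul_comm s N
    have h4 : k ≤ 2*(N*s) := by omega
    have h5 : ((2*(N*s) : ℕ):ℝ) = 2*(s:ℝ)*(N:ℝ) := by push_cast; ring
    calc (k:ℝ) ≤ ((2*(N*s) : ℕ):ℝ) := by exact_mod_cast h4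
    _ = _ := h5
  have hNreal : (k:ℝ)/(2*(s:ℝ)) ≤ (N:ℝ) := by
    rw [div_le_iff₀ (by linarith)]
    linarith
  set Q := ∏ i ∈ Finset.range s, (1 - (1 - p^(s-i))^N) with hQdef
  have hfactor : ∀ i ∈ Finset.range s, c ≤ 1 - (1 - p^(s-i))^N := by
    intro i _
    have hx0 : (0:ℝ) ≤ p^(s-i) := by positivity
    have hx1 : p^(s-i) ≤ 1 := pow_le_one₀ hp0.le hp1'
    have hβ : 1/(2*(s:ℝ)) ≤ (N:ℝ) * p^(s-i) := by
      have h1 : p^s ≤ p^(s-i) := pow_le_pow_of_le_one hp0.le hp1' (Nat.sub_le s i)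
      have h2 : (k:ℝ)/(2*(s:ℝ)) * p^s ≤ (N:ℝ) * p^(s-i) := by
        apply mul_le_mul hNreal h1 (by positivity) (by positivity)
      have h3 : 1/(2*(s:ℝ)) ≤ (k:ℝ)/(2*(s:ℝ)) * p^s := by
        rw [div_mul_eq_mul_div, div_le_div_iff₀ (by linarith) (by linarith)]
        nlinarith
      linarith
    have := one_sub_pow_ge hx0 hx1 (by positivity) hβ
    have heq : (1/(2*(s:ℝ)))/(1 + 1/(2*(s:ℝ))) = c := by
      rw [hc]
      field_simp
    linarith [heq ▸ this]
  have hQge : c^s ≤ Q := by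
    calc c^s = ∏ _i ∈ Finset.range s, c := by rw [Finset.prod_const, Finset.card_range]
    _ ≤ Q := Finset.prod_le_prod (fun i _ => hc0.le) hfactor
  have hNQ : c^s / (2*(s:ℝ)) * (k:ℝ) ≤ (N:ℝ) * Q := by
    calc c^s / (2*(s:ℝ)) * (k:ℝ) = (k:ℝ)/(2*(s:ℝ)) * c^s := by ring
    _ ≤ (N:ℝ) * Q := by
        apply mul_le_mul hNreal hQge (by positivity) (by positivity)
  have hmb := main_bound (by omega) hNs p hp0 hp1'
  rw [← hQdef] at hmb
  have hexp : Real.exp (-((N:ℝ)*Q)) ≤ Real.exp (-(c^s / (2*(s:ℝ)) * (k:ℝ))) :=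
    Real.exp_le_exp.mpr (by linarith)
  have : -(c^s / (2*(s:ℝ))) * (k:ℝ) = -(c^s / (2*(s:ℝ)) * (k:ℝ)) := by ring
  rw [this]
  linarith

set_option maxHeartbeats 2000000 in
lemma part_a (s : ℕ) (hs : 3 ≤ s) :
    ∃ ε₀ κ p₀ : ℝ, 0 < ε₀ ∧ 0 < κ ∧ 0 < p₀ ∧ ∀ p : ℝ, 0 < p → p < p₀ →
      ∀ k : ℕ, p ^ (-((s : ℝ) - (tseq s : ℝ) - 1)) ≤ (k : ℝ) →
        (k : ℝ) < ε₀ * p ^ (-((s : ℝ) - (tseq s : ℝ))) →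
        1 - Real.exp (-κ * p ^ (alphaseq s * ((tseq s : ℝ) + 2)) * (k : ℝ) ^ (tseq s + 2)) ≤
          probOn2 p (rect2 k k) (IntFilled2 s s (rect2 k k)) := by
  have hsr : (3:ℝ) ≤ (s:ℝ) := by exact_mod_cast hs
  obtain ⟨t, htdef⟩ : ∃ t, t = tseq s := ⟨_, rfl⟩
  have halpha : ∀ p : ℝ, 0 ≤ p → p ^ (alphaseq s * ((t:ℝ) + 2)) =
      p ^ ((∑ i ∈ Finset.range (t+1), (s-i) : ℕ) : ℝ) := by
    intro p _
    rw [htdef, alphaseq_mul s hs]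
  rw [← htdef]
  have ht1 : 1 ≤ t := htdef ▸ tseq_pos s hs
  have ht2 : t ≤ s - 2 := htdef ▸ tseq_le s hs
  have hts : t + 2 ≤ s := by omega
  set m₁ : ℕ := s - t - 1 with hm₁
  set m₂ : ℕ := s - t with hm₂
  have hm12 : m₂ = m₁ + 1 := by omega
  have hm₁1 : 1 ≤ m₁ := by omega
  set c : ℝ := 1/(2*(s:ℝ)+1) with hc
  have hc0 : 0 < c := by rw [hc]; positivity
  set Sig : ℕ := ∑ i ∈ Finset.range (t+1), (s-i) with hSig
  set κ : ℝ := c^m₁ / (2*(s:ℝ) * (4*(s:ℝ))^(t+1)) with hκ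
  have hκ0 : 0 < κ := by rw [hκ]; positivity
  refine ⟨1/2, κ, 1/(4*(s:ℝ)), by norm_num, hκ0, by positivity, ?_⟩
  intro p hp0 hp1 k hk1 hk2
  have hp1' : p ≤ 1 := by
    have : 1/(4*(s:ℝ)) ≤ 1 := by
      rw [div_le_one (by linarith)]
      linarith
    linarith
  have hcast1 : ((m₁:ℕ):ℝ) = (s:ℝ) - (t:ℝ) - 1 := by
    rw [hm₁, Nat.cast_sub (by omega), Nat.cast_sub (by omega)]
    norm_num
  have hcast2 : ((m₂:ℕ):ℝ) = (s:ℝ) - (t:ℝ) := by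
    rw [hm₂, Nat.cast_sub (by omega)]
  have hpow1 : (0:ℝ) < p^m₁ := pow_pos hp0 m₁
  have hpow2 : (0:ℝ) < p^m₂ := pow_pos hp0 m₂
  -- convert the rpow hypotheses
  have hk1' : 1 ≤ (k:ℝ) * p^m₁ := by
    have he : p ^ (-((s:ℝ) - (t:ℝ) - 1)) = (p^m₁)⁻¹ := by
      rw [← hcast1, ← Real.rpow_natCast p m₁, ← Real.rpow_neg hp0.le]
    rw [he] at hk1
    have := mul_le_mul_of_nonneg_right hk1 hpow1.le
    rwa [inv_mul_cancel₀ hpow1.ne'] at this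
  have hk2' : (k:ℝ) * p^m₂ < 1/2 := by
    have he : p ^ (-((s:ℝ) - (t:ℝ))) = (p^m₂)⁻¹ := by
      rw [← hcast2, ← Real.rpow_natCast p m₂, ← Real.rpow_neg hp0.le]
    rw [he] at hk2
    have := mul_lt_mul_of_pos_right hk2 hpow2
    rwa [mul_assoc, inv_mul_cancel₀ hpow2.ne', mul_one] at this
  -- k is large
  have hkreal : 4*(s:ℝ) < (k:ℝ) := by
    have h1 : p^m₁ ≤ p := by
      calc p^m₁ ≤ p^1 := pow_le_pow_of_le_one hp0.le hp1' hm₁1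
      _ = p := pow_one p
    have hkp : (p^m₁)⁻¹ ≤ (k:ℝ) := by
      rw [inv_le_iff_one_le_mul₀ hpow1]
      linarith [hk1']
    have h2 : p⁻¹ ≤ (p^m₁)⁻¹ := by
      have := one_div_le_one_div_of_le hpow1 h1
      rwa [one_div, one_div] at this
    have h3 : 4*(s:ℝ) < p⁻¹ := by
      rw [lt_inv_comm₀ (by positivity) hp0]
      calc p < 1/(4*(s:ℝ)) := hp1
      _ = (4*(s:ℝ))⁻¹ := one_div _
    linarith
  set N := k / s with hN
  have hNs : N*s ≤ k := Nat.div_mul_le_self k s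
  have hsk : s ≤ k := by
    have : (s:ℝ) < (k:ℝ) := by linarith
    exact_mod_cast this.le
  have hN1 : 1 ≤ N := (Nat.one_le_div_iff (by omega)).mpr hsk
  have hkN : (k:ℝ) ≤ 2*(s:ℝ)*(N:ℝ) := by
    have h1 : s * N + k % s = k := by rw [hN]; exact Nat.div_add_mod k s
    have h2 : k % s < s := Nat.mod_lt k (by omega)
    have h3 : s ≤ N*s := Nat.le_mul_of_pos_left s (by omega)
    have hcomm : s*N = N*s := Nat.mul_comm s N
    have h4 : k ≤ 2*(N*s) := by omega
    have h5 : ((2*(N*s) : ℕ):ℝ) = 2*(s:ℝ)*(N:ℝ) := by push_cast; ring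
    calc (k:ℝ) ≤ ((2*(N*s) : ℕ):ℝ) := by exact_mod_cast h4
    _ = _ := h5
  have hNreal : (k:ℝ)/(2*(s:ℝ)) ≤ (N:ℝ) := by
    rw [div_le_iff₀ (by linarith)]
    linarith
  have hNk : (N:ℝ) ≤ (k:ℝ) := by exact_mod_cast Nat.div_le_self k s
  set Q := ∏ i ∈ Finset.range s, (1 - (1 - p^(s-i))^N) with hQdef
  set lower : ℕ → ℝ := fun i => if i < t+1 then (N:ℝ)*p^(s-i)/2 else c with hlow
  have hlow0 : ∀ i, 0 ≤ lower i := by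
    intro i
    rw [hlow]
    by_cases h : i < t+1 <;> simp [h] <;> positivity
  have hfactor : ∀ i ∈ Finset.range s, lower i ≤ 1 - (1 - p^(s-i))^N := by
    intro i hi
    rw [Finset.mem_range] at hi
    have hx0 : (0:ℝ) ≤ p^(s-i) := by positivity
    have hx1 : p^(s-i) ≤ 1 := pow_le_one₀ hp0.le hp1'
    rw [hlow]
    by_cases h : i < t+1
    · simp only [h, if_true]
      have hsm : m₂ ≤ s - i := by omega
      have h1 : p^(s-i) ≤ p^m₂ := pow_le_pow_of_le_one hp0.le hp1' hsm
      have h2 : (N:ℝ)*p^(s-i) ≤ 1/2 := by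
        calc (N:ℝ)*p^(s-i) ≤ (k:ℝ)*p^m₂ := by
              apply mul_le_mul hNk h1 (by positivity) (by positivity)
        _ ≤ 1/2 := hk2'.le
      exact one_sub_pow_ge_half hx0 hx1 h2
    · simp only [h, if_false]
      have hsm : s - i ≤ m₁ := by omega
      have h1 : p^m₁ ≤ p^(s-i) := pow_le_pow_of_le_one hp0.le hp1' hsm
      have hβ : 1/(2*(s:ℝ)) ≤ (N:ℝ) * p^(s-i) := by
        have h2 : (k:ℝ)/(2*(s:ℝ)) * p^m₁ ≤ (N:ℝ) * p^(s-i) := by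
          apply mul_le_mul hNreal h1 (by positivity) (by positivity)
        have h3 : 1/(2*(s:ℝ)) ≤ (k:ℝ)/(2*(s:ℝ)) * p^m₁ := by
          rw [div_mul_eq_mul_div, div_le_div_iff₀ (by linarith) (by linarith)]
          nlinarith
        linarith
      have := one_sub_pow_ge hx0 hx1 (by positivity) hβ
      have heq : (1/(2*(s:ℝ)))/(1 + 1/(2*(s:ℝ))) = c := by
        rw [hc]
        field_simp
      linarith [heq ▸ this]
  have hQge : ∏ i ∈ Finset.range s, lower i ≤ Q :=
    Finset.prod_le_prod (fun i _ => hlow0 i) hfactor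
  have hfilter1 : (Finset.range s).filter (fun i => i < t+1) = Finset.range (t+1) := by
    ext i
    simp only [Finset.mem_filter, Finset.mem_range]
    omega
  have hfilter2 : (Finset.range s).filter (fun i => ¬ i < t+1) = Finset.Ico (t+1) s := by
    ext i
    simp only [Finset.mem_filter, Finset.mem_range, Finset.mem_Ico]
    omega
  have heval : ∏ i ∈ Finset.range s, lower i = ((N:ℝ)/2)^(t+1) * p^Sig * c^m₁ := by
    rw [hlow, Finset.prod_ite, hfilter1, hfilter2]
    rw [Finset.prod_const, Nat.card_Ico]
    have e1 : ∏ i ∈ Finset.range (t+1), ((N:ℝ)*p^(s-i)/2) =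
        ∏ i ∈ Finset.range (t+1), (((N:ℝ)/2)*p^(s-i)) := by
      refine Finset.prod_congr rfl ?_
      intro i _
      ring
    rw [e1, Finset.prod_mul_distrib, Finset.prod_const, Finset.card_range,
      Finset.prod_pow_eq_pow_sum, ← hSig]
    have : s - (t+1) = m₁ := by omega
    rw [this]
  have hQge' : ((N:ℝ)/2)^(t+1) * p^Sig * c^m₁ ≤ Q := heval ▸ hQge
  -- final numeric chain
  have hNQ : κ * p^Sig * (k:ℝ)^(t+2) ≤ (N:ℝ) * Q := by
    have hb1 : (0:ℝ) ≤ (k:ℝ)/(4*(s:ℝ)) := by positivity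
    have hb2 : (k:ℝ)/(4*(s:ℝ)) ≤ (N:ℝ)/2 := by
      rw [div_le_div_iff₀ (by linarith) (by norm_num)]
      nlinarith [hkN]
    have hb3 : ((k:ℝ)/(4*(s:ℝ)))^(t+1) ≤ ((N:ℝ)/2)^(t+1) := pow_le_pow_left₀ hb1 hb2 _
    have hb4 : ((k:ℝ)/(4*(s:ℝ)))^(t+1) * (p^Sig * c^m₁) ≤ Q := by
      calc ((k:ℝ)/(4*(s:ℝ)))^(t+1) * (p^Sig * c^m₁)
          ≤ ((N:ℝ)/2)^(t+1) * (p^Sig * c^m₁) := by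
            apply mul_le_mul_of_nonneg_right hb3 (by positivity)
      _ = ((N:ℝ)/2)^(t+1) * p^Sig * c^m₁ := by ring
      _ ≤ Q := hQge'
    have hb5 : (k:ℝ)/(2*(s:ℝ)) * (((k:ℝ)/(4*(s:ℝ)))^(t+1) * (p^Sig * c^m₁)) ≤ (N:ℝ) * Q := by
      apply mul_le_mul hNreal hb4 (by positivity) (by positivity)
    have hb6 : κ * p^Sig * (k:ℝ)^(t+2) =
        (k:ℝ)/(2*(s:ℝ)) * (((k:ℝ)/(4*(s:ℝ)))^(t+1) * (p^Sig * c^m₁)) := by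
      have hs0 : (s:ℝ) ≠ 0 := (by linarith : (0:ℝ) < s).ne'
      rw [hκ]
      field_simp
      have e1 : (s:ℝ)^t * (s:ℝ)⁻¹^t = 1 := by rw [← mul_pow, mul_inv_cancel₀ hs0, one_pow]
      have e2 : ((1:ℝ)/4)^t * 4^t = 1 := by rw [← mul_pow]; norm_num
      have e3 : (s:ℝ) * (s:ℝ)⁻¹ = 1 := mul_inv_cancel₀ hs0
      linear_combination (-((k:ℝ)^2*(k:ℝ)^t)) * (((s:ℝ)^t * (s:ℝ)⁻¹^t) * (((1:ℝ)/4)^t * 4^t) * e3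
        + (((1:ℝ)/4)^t * 4^t) * e1 + e2)
    linarith [hb6 ▸ hb5]
  have hmb := main_bound (by omega) hNs p hp0 hp1'
  rw [← hQdef] at hmb
  have hrw : p ^ (alphaseq s * ((t:ℝ) + 2)) = p ^ Sig := by
    rw [halpha p hp0.le, Real.rpow_natCast]
  rw [hrw]
  have hexp : Real.exp (-((N:ℝ)*Q)) ≤ Real.exp (-(κ * p^Sig * (k:ℝ)^(t+2))) :=
    Real.exp_le_exp.mpr (by linarith)
  have hre : -κ * p^Sig * (k:ℝ)^(t+2) = -(κ * p^Sig * (k:ℝ)^(t+2)) := by ring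
  rw [hre]
  linarith

/-- filling probabilities for squares under `N_s^{s,s}`-bootstrap
percolation (`t = t_s`). -/
theorem stmt15 (s : ℕ) (hs : 3 ≤ s) :
    (∃ ε₀ κ p₀ : ℝ, 0 < ε₀ ∧ 0 < κ ∧ 0 < p₀ ∧ ∀ p : ℝ, 0 < p → p < p₀ →
      ∀ k : ℕ, p ^ (-((s : ℝ) - (tseq s : ℝ) - 1)) ≤ (k : ℝ) →
        (k : ℝ) < ε₀ * p ^ (-((s : ℝ) - (tseq s : ℝ))) →
        1 - Real.exp (-κ * p ^ (alphaseq s * ((tseq s : ℝ) + 2)) * (k : ℝ) ^ (tseq s + 2)) ≤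
          probOn2 p (rect2 k k) (IntFilled2 s s (rect2 k k))) ∧
    (∃ κ' p₁ : ℝ, 0 < κ' ∧ 0 < p₁ ∧ ∀ p : ℝ, 0 < p → p < p₁ →
      ∀ k : ℕ, p ^ (-(s : ℝ)) ≤ (k : ℝ) →
        1 - Real.exp (-κ' * (k : ℝ)) ≤
          probOn2 p (rect2 k k) (IntFilled2 s s (rect2 k k))) :=
  ⟨part_a s hs, part_b s hs⟩
end
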